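/- arXiv:1609.02827 — 7 statements merged into one kernel-verified Lean document; each statement's English description precedes it below -/
import Mathlib

section
/- Let $a, b > 0$ and $\xi \geq 0$. For every positive integer $n$, the quantities $F_n = \frac{1}{\Gamma(b)} \int_{\xi}^{+\infty} t^{b-1} e^{-a t} (t-\xi)^n \, dt$ satisfy the three-term recurrence relation $a F_{n+1} = (n + b - a\xi) F_n + n \xi F_{n-1}$. -/
/-!
Differentiate `t ^ b * exp (-a t) * (t - ξ) ^ n` and integrate over `(ξ, ∞)`: the boundary
terms vanish (at `ξ` because `n ≥ 1`), and after writing `t ^ b = t ^ (b - 1) * ((t - ξ) + ξ)`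
the derivative is a combination of the integrands of `F (n + 1)`, `F n` and `F (n - 1)`.
-/

open Real MeasureTheory Set Filter Topology

namespace ShiftedGamma

noncomputable def kernel (a b ξ : ℝ) (n : ℕ) (t : ℝ) : ℝ :=
  t ^ (b - 1) * exp (-a * t) * (t - ξ) ^ n

noncomputable def moment (a b ξ : ℝ) (n : ℕ) : ℝ := ∫ t in Ioi ξ, kernel a b ξ n t

variable {a b ξ : ℝ}

lemma integrableOn_kernel (ha : 0 < a) (hξ : 0 ≤ ξ) {n : ℕ} (hbn : 0 < b + n) :
    IntegrableOn (kernel a b ξ n) (Ioi ξ) := by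
  have hdom : IntegrableOn (fun t : ℝ => t ^ (b - 1 + n) * exp (-a * t)) (Ioi ξ) := by
    have := integrableOn_rpow_mul_exp_neg_mul_rpow (s := b - 1 + n) (p := 1)
      (by linarith) one_pos ha
    simp only [rpow_one] at this
    exact this.mono_set (Ioi_subset_Ioi hξ)
  refine hdom.integrable.mono' (by unfold kernel; fun_prop) ?_
  filter_upwards [ae_restrict_mem measurableSet_Ioi] with t (ht : ξ < t)
  have ht0 : 0 < t := hξ.trans_lt ht
  rw [norm_of_nonneg (by unfold kernel; positivity), rpow_add ht0, rpow_natCast]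
  calc kernel a b ξ n t ≤ t ^ (b - 1) * exp (-a * t) * t ^ n := by
        unfold kernel; gcongr; linarith
    _ = _ := by ring

lemma tendsto_boundary_atTop (ha : 0 < a) (hξ : 0 ≤ ξ) (n : ℕ) :
    Tendsto (fun t => t ^ b * exp (-a * t) * (t - ξ) ^ n) atTop (𝓝 0) := by
  refine squeeze_zero' ?_ ?_ (tendsto_rpow_mul_exp_neg_mul_atTop_nhds_zero (b + n) a ha)
  all_goals filter_upwards [eventually_gt_atTop ξ] with t ht
  all_goals have ht0 : 0 < t := hξ.trans_lt ht
  · have : 0 ≤ t - ξ := by linarith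
    positivity
  · calc t ^ b * exp (-a * t) * (t - ξ) ^ n ≤ t ^ b * exp (-a * t) * t ^ n := by
          gcongr; linarith
      _ = t ^ (b + n) * exp (-a * t) := by rw [rpow_add ht0, rpow_natCast]; ring

lemma hasDerivAt_boundary {t : ℝ} (ht : t ≠ 0) (n : ℕ) :
    HasDerivAt (fun t => t ^ b * exp (-a * t) * (t - ξ) ^ (n + 1))
      ((n + 1 + b - a * ξ) * kernel a b ξ (n + 1) t - a * kernel a b ξ (n + 2) t
        + (n + 1) * ξ * kernel a b ξ n t) t := by
  have hpow := hasDerivAt_rpow_const (p := b) (Or.inl ht)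
  have hexp := ((hasDerivAt_id t).const_mul (-a)).exp
  have hsub := ((hasDerivAt_id t).sub_const ξ).pow (n + 1)
  refine ((hpow.mul hexp).mul hsub).congr_deriv ?_
  have htb : t ^ b = t ^ (b - 1) * ((t - ξ) + ξ) := by
    rw [sub_add_cancel, ← rpow_add_one ht, sub_add_cancel]
  simp only [kernel, id, Pi.mul_apply, Pi.pow_apply, Nat.add_sub_cancel, htb]
  push_cast
  ring

theorem moment_recurrence (ha : 0 < a) (hb : 0 < b) (hξ : 0 ≤ ξ) (n : ℕ) :
    a * moment a b ξ (n + 2) = (n + 1 + b - a * ξ) * moment a b ξ (n + 1)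
      + (n + 1) * ξ * moment a b ξ n := by
  have hint (m : ℕ) : IntegrableOn (kernel a b ξ m) (Ioi ξ) :=
    integrableOn_kernel ha hξ (by positivity)
  have hcont :
      ContinuousWithinAt (fun t => t ^ b * exp (-a * t) * (t - ξ) ^ (n + 1)) (Ici ξ) ξ :=
    ((continuousAt_rpow_const ξ b (Or.inr hb.le)).mul (by fun_prop)).mul
      (by fun_prop) |>.continuousWithinAt
  have hFTC := integral_Ioi_of_hasDerivAt_of_tendsto hcont
    (fun t ht => hasDerivAt_boundary (hξ.trans_lt ht).ne' n)
    ((((hint _).const_mul _).sub ((hint _).const_mul _)).add ((hint _).const_mul _))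
    (tendsto_boundary_atTop ha hξ (n + 1))
  rw [integral_add ?_ ((hint _).const_mul _), integral_sub ((hint _).const_mul _)
    ((hint _).const_mul _), integral_const_mul, integral_const_mul, integral_const_mul] at hFTC
  · simp only [moment, sub_self, zero_pow n.succ_ne_zero, mul_zero] at hFTC ⊢
    linarith
  · exact ((hint _).const_mul _).sub ((hint _).const_mul _)

end ShiftedGamma

/-- Three-term recurrence: for `a, b > 0`, `ξ ≥ 0` and every positive integer `n`,
`a F_(n+1) = (n + b - a ξ) F_n + n ξ F_(n-1)`. -/
theorem F_recurrence (a b ξ : ℝ) (ha : 0 < a) (hb : 0 < b) (hξ : 0 ≤ ξ)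
    (F : ℕ → ℝ)
    (hF : ∀ n : ℕ, F n = (1 / Real.Gamma b) *
      ∫ t in Set.Ioi ξ, t ^ (b - 1) * Real.exp (-a * t) * (t - ξ) ^ n)
    (n : ℕ) (hn : 1 ≤ n) :
    a * F (n + 1) = ((n : ℝ) + b - a * ξ) * F n + (n : ℝ) * ξ * F (n - 1) := by
  obtain ⟨k, rfl⟩ : ∃ k, n = k + 1 := Nat.exists_eq_add_of_le' hn
  have hFm : ∀ m, F m = 1 / Gamma b * ShiftedGamma.moment a b ξ m := hF
  have hrec := ShiftedGamma.moment_recurrence ha hb hξ k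
  rw [hFm, hFm, hFm, Nat.add_sub_cancel]
  push_cast
  linear_combination (1 / Gamma b) * hrec
end

section
/- Let $a > 0$, $0 < b \leq 1$, $\xi \geq 0$, and let $n$ be a non-negative integer. Then $a\, c_{n+1}(a,b) \leq (n+1)\, c_n(a,b)$, where $c_n(a,b) = \int_0^{+\infty} (\tau+\xi)^{b-1} \tau^n e^{-a\tau} \, d\tau$. -/
open Real MeasureTheory Set Filter Topology

/-! `F τ = (τ + ξ) ^ (b - 1) * τ ^ (n + 1) * exp (-a τ)` vanishes at `0` and at `∞`, so
integrating `F'` over `(0, ∞)` gives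
`(n + 1) c_n - a c_(n+1) = (1 - b) ∫ (τ + ξ) ^ (b - 2) τ ^ (n + 1) exp (-a τ) ≥ 0`. -/

noncomputable def shiftedGammaIntegrand (a ξ β : ℝ) (m : ℕ) (x : ℝ) : ℝ :=
  (x + ξ) ^ β * x ^ m * exp (-a * x)

namespace shiftedGammaIntegrand

variable {a ξ β x : ℝ} {m : ℕ}

lemma nonneg (hξ : 0 ≤ ξ) (hx : 0 ≤ x) : 0 ≤ shiftedGammaIntegrand a ξ β m x := by
  unfold shiftedGammaIntegrand
  have : 0 ≤ x + ξ := by linarith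
  positivity

@[simp]
lemma succ_apply_zero : shiftedGammaIntegrand a ξ β (m + 1) 0 = 0 := by
  simp [shiftedGammaIntegrand]

lemma le_rpow_mul_exp (hξ : 0 ≤ ξ) (hβ : β ≤ 0) (hx : 0 < x) :
    shiftedGammaIntegrand a ξ β m x ≤ x ^ ((m : ℝ) + β) * exp (-a * x) :=
  calc (x + ξ) ^ β * x ^ m * exp (-a * x) ≤ x ^ β * x ^ m * exp (-a * x) := by
        have := rpow_le_rpow_of_nonpos hx (by linarith : x ≤ x + ξ) hβ
        gcongr
    _ = x ^ ((m : ℝ) + β) * exp (-a * x) := by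
        rw [rpow_add hx, rpow_natCast]; ring

lemma integrableOn_Ioi (ha : 0 < a) (hξ : 0 ≤ ξ) (hβ : β ≤ 0) (hmβ : -1 < (m : ℝ) + β) :
    IntegrableOn (shiftedGammaIntegrand a ξ β m) (Ioi 0) := by
  have hdom : IntegrableOn (fun x ↦ x ^ ((m : ℝ) + β) * exp (-a * x)) (Ioi 0) := by
    simpa only [rpow_one] using integrableOn_rpow_mul_exp_neg_mul_rpow hmβ zero_lt_one ha
  refine hdom.mono' ?_ ?_
  · refine ContinuousOn.aestronglyMeasurable ?_ measurableSet_Ioi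
    refine ((ContinuousOn.rpow_const (by fun_prop) fun x hx ↦ Or.inl ?_).mul
      (by fun_prop)).mul (by fun_prop)
    exact (add_pos_of_pos_of_nonneg hx hξ).ne'
  · filter_upwards [ae_restrict_mem measurableSet_Ioi] with x hx
    rw [norm_of_nonneg (nonneg hξ hx.le)]
    exact le_rpow_mul_exp hξ hβ hx

lemma hasDerivAt_succ (hx : 0 < x + ξ) :
    HasDerivAt (shiftedGammaIntegrand a ξ β (m + 1))
      (β * shiftedGammaIntegrand a ξ (β - 1) (m + 1) x
        + (m + 1) * shiftedGammaIntegrand a ξ β m x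
        - a * shiftedGammaIntegrand a ξ β (m + 1) x) x := by
  have h₁ : HasDerivAt (fun y ↦ (y + ξ) ^ β) (β * (x + ξ) ^ (β - 1)) x := by
    simpa using ((hasDerivAt_id x).add_const ξ).rpow_const (p := β) (Or.inl hx.ne')
  have h₂ : HasDerivAt (fun y : ℝ ↦ y ^ (m + 1)) ((m + 1) * x ^ m) x := by
    simpa using hasDerivAt_pow (m + 1) x
  have h₃ : HasDerivAt (fun y ↦ exp (-a * y)) (-a * exp (-a * x)) x := by
    simpa [mul_comm] using ((hasDerivAt_id x).const_mul (-a)).exp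
  refine ((h₁.mul h₂).mul h₃).congr_deriv ?_
  simp only [shiftedGammaIntegrand, Pi.mul_apply]
  ring

lemma continuousWithinAt_Ici_zero (hξ : 0 ≤ ξ) (hβ : β ≤ 0)
    (hmβ : 0 < (m : ℝ) + 1 + β) :
    ContinuousWithinAt (shiftedGammaIntegrand a ξ β (m + 1)) (Ici 0) 0 := by
  have hbound :
      Tendsto (fun x ↦ x ^ ((m : ℝ) + 1 + β) * exp (-a * x)) (𝓝[Ici 0] 0) (𝓝 0) := by
    have := ((continuousAt_rpow_const 0 _ (Or.inr hmβ.le)).mul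
      (by fun_prop : ContinuousAt (fun x ↦ exp (-a * x)) 0)).continuousWithinAt (s := Ici 0)
    simpa [ContinuousWithinAt, zero_rpow hmβ.ne', Pi.mul_def] using this
  rw [ContinuousWithinAt, succ_apply_zero]
  refine squeeze_zero' ?_ ?_ hbound
  · filter_upwards [self_mem_nhdsWithin] with x hx using nonneg hξ hx
  · filter_upwards [self_mem_nhdsWithin] with x (hx : 0 ≤ x)
    rcases hx.eq_or_lt with rfl | hx
    · simp [zero_rpow hmβ.ne']
    · simpa [add_assoc] using le_rpow_mul_exp (m := m + 1) hξ hβ hx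

lemma tendsto_atTop (ha : 0 < a) (hξ : 0 ≤ ξ) (hβ : β ≤ 0) :
    Tendsto (shiftedGammaIntegrand a ξ β m) atTop (𝓝 0) := by
  refine squeeze_zero' ?_ ?_ (tendsto_rpow_mul_exp_neg_mul_atTop_nhds_zero ((m : ℝ) + β) a ha)
  · filter_upwards [eventually_ge_atTop 0] with x hx using nonneg hξ hx
  · filter_upwards [eventually_gt_atTop 0] with x hx using le_rpow_mul_exp hξ hβ hx

theorem succ_mul_integral_sub_mul_integral (ha : 0 < a) (hξ : 0 ≤ ξ) (hβ₀ : -1 < β)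
    (hβ₁ : β ≤ 0) :
    ((m : ℝ) + 1) * (∫ x in Ioi 0, shiftedGammaIntegrand a ξ β m x)
      - a * (∫ x in Ioi 0, shiftedGammaIntegrand a ξ β (m + 1) x)
      = -β * ∫ x in Ioi 0, shiftedGammaIntegrand a ξ (β - 1) (m + 1) x := by
  have hm : (0 : ℝ) ≤ m := m.cast_nonneg
  have hI₁ := integrableOn_Ioi (m := m + 1) ha hξ (β := β - 1) (by linarith)
    (by push_cast; linarith)
  have hI₂ := integrableOn_Ioi (m := m) ha hξ hβ₁ (by linarith)
  have hI₃ := integrableOn_Ioi (m := m + 1) ha hξ hβ₁ (by push_cast; linarith)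
  have hFTC := integral_Ioi_of_hasDerivAt_of_tendsto
    (continuousWithinAt_Ici_zero hξ hβ₁ (by linarith))
    (fun x (hx : 0 < x) ↦ hasDerivAt_succ (add_pos_of_pos_of_nonneg hx hξ))
    (((hI₁.const_mul β).add (hI₂.const_mul _)).sub (hI₃.const_mul a))
    (tendsto_atTop ha hξ hβ₁)
  rw [integral_sub (by exact (hI₁.const_mul β).add (hI₂.const_mul _))
      (by exact hI₃.const_mul a),
    integral_add (by exact hI₁.const_mul β) (by exact hI₂.const_mul _), integral_const_mul,
    integral_const_mul, integral_const_mul, succ_apply_zero] at hFTC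
  linarith

end shiftedGammaIntegrand

/-- For `a > 0`, `0 < b ≤ 1`, `ξ ≥ 0`: `a c_(n+1)(a,b) ≤ (n+1) c_n(a,b)`. -/
theorem c_ineq_b_le_one (a b ξ : ℝ) (ha : 0 < a) (hb0 : 0 < b) (hb1 : b ≤ 1)
    (hξ : 0 ≤ ξ) (n : ℕ)
    (c : ℕ → ℝ)
    (hc : ∀ m : ℕ, c m =
      ∫ τ in Set.Ioi (0 : ℝ), (τ + ξ) ^ (b - 1) * τ ^ m * Real.exp (-a * τ)) :
    a * c (n + 1) ≤ ((n : ℝ) + 1) * c n := by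
  have hrec := shiftedGammaIntegrand.succ_mul_integral_sub_mul_integral (m := n) ha hξ
    (β := b - 1) (by linarith) (by linarith)
  have hrest : 0 ≤ ∫ x in Ioi 0, shiftedGammaIntegrand a ξ (b - 1 - 1) (n + 1) x :=
    setIntegral_nonneg measurableSet_Ioi fun x hx ↦ shiftedGammaIntegrand.nonneg hξ hx.le
  have hc' (m : ℕ) : c m = ∫ x in Ioi 0, shiftedGammaIntegrand a ξ (b - 1) m x := hc m
  rw [hc', hc']
  linarith [mul_nonneg (sub_nonneg.2 hb1) hrest]
end

section
/- Let $a, b > 0$, $\xi \geq 0$, set $\beta = \max(1, b)$, and let $n$ be a non-negative integer. Then $0 < F_{n+1} \leq \frac{n+\beta}{a} F_n$, where $F_n = \frac{1}{\Gamma(b)} \int_{\xi}^{+\infty} t^{b-1} e^{-a t} (t-\xi)^n \, dt$. -/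
/-!
Integrating by parts against `d/dt (t ^ (b - 1) * exp (-a t) * (t - ξ) ^ (n + 1))` gives
`a F_(n+1) = (n + 1) F_n + (b - 1) G`, where `G` is the integral with `t ^ (b - 2) * (t - ξ) ^ (n + 1)`
in place of `t ^ (b - 1) * (t - ξ) ^ n`. Since `0 ≤ t - ξ ≤ t`, we have `0 ≤ G ≤ F_n`, hence
`(b - 1) G ≤ (β - 1) F_n` whether `b ≥ 1` or `b < 1`.
-/

open Real MeasureTheory Set Filter Topology

noncomputable def tailKernel (a ξ c : ℝ) (m : ℕ) (t : ℝ) : ℝ :=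
  t ^ c * exp (-a * t) * (t - ξ) ^ m

namespace tailKernel

variable {a ξ c t : ℝ} {m : ℕ}

lemma pos (hξ : 0 ≤ ξ) (ht : ξ < t) : 0 < tailKernel a ξ c m t := by
  have := rpow_pos_of_pos (hξ.trans_lt ht) c
  have := sub_pos.2 ht
  unfold tailKernel
  positivity

lemma le_rpow_mul_exp (hξ : 0 ≤ ξ) (ht : ξ < t) :
    tailKernel a ξ c m t ≤ t ^ (c + m) * exp (-a * t) := by
  have ht0 : 0 < t := hξ.trans_lt ht
  calc tailKernel a ξ c m t ≤ t ^ c * exp (-a * t) * t ^ m := by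
        unfold tailKernel
        gcongr
        linarith
    _ = t ^ (c + m) * exp (-a * t) := by rw [rpow_add ht0, rpow_natCast]; ring

lemma sub_one_succ_le (hξ : 0 ≤ ξ) (ht : ξ < t) :
    tailKernel a ξ (c - 1) (m + 1) t ≤ tailKernel a ξ c m t := by
  have ht0 : 0 < t := hξ.trans_lt ht
  calc tailKernel a ξ (c - 1) (m + 1) t
      = t ^ (c - 1) * (t - ξ) * exp (-a * t) * (t - ξ) ^ m := by unfold tailKernel; ring
    _ ≤ t ^ (c - 1) * t * exp (-a * t) * (t - ξ) ^ m := by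
        have := sub_pos.2 ht
        gcongr
        linarith
    _ = tailKernel a ξ c m t := by
        rw [rpow_sub_one ht0.ne', div_mul_cancel₀ _ ht0.ne']; rfl

lemma continuousAt (ht : 0 < t) : ContinuousAt (tailKernel a ξ c m) t := by
  unfold tailKernel
  fun_prop (disch := exact Or.inl ht.ne')

lemma hasDerivAt (ht : 0 < t) :
    HasDerivAt (tailKernel a ξ c (m + 1))
      (c * tailKernel a ξ (c - 1) (m + 1) t - a * tailKernel a ξ c (m + 1) t
        + (m + 1) * tailKernel a ξ c m t) t := by
  have hpow := hasDerivAt_rpow_const (p := c) (Or.inl ht.ne')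
  have hexp := ((hasDerivAt_id' t).const_mul (-a)).exp
  have hsub := ((hasDerivAt_id' t).sub_const ξ).fun_pow (m + 1)
  refine ((hpow.fun_mul hexp).fun_mul hsub).congr_deriv ?_
  simp only [tailKernel, Nat.cast_add, Nat.cast_one, add_tsub_cancel_right]
  ring

lemma tendsto_atTop (ha : 0 < a) (hξ : 0 ≤ ξ) :
    Tendsto (tailKernel a ξ c m) atTop (𝓝 0) := by
  refine squeeze_zero' ?_ ?_ (tendsto_rpow_mul_exp_neg_mul_atTop_nhds_zero (c + m) a ha)
  · filter_upwards [eventually_gt_atTop ξ] with t ht using (pos hξ ht).le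
  · filter_upwards [eventually_gt_atTop ξ] with t ht using le_rpow_mul_exp hξ ht

lemma continuousWithinAt_succ (hξ : 0 ≤ ξ) (hcm : -1 < c + m) :
    ContinuousWithinAt (tailKernel a ξ c (m + 1)) (Ici ξ) ξ := by
  rcases hξ.eq_or_lt with rfl | hξ
  · -- on `Ici 0` the kernel is `t ^ (c + m + 1) * exp (-a * t)`, with a positive exponent
    have hexp : 0 < c + (m + 1 : ℕ) := by push_cast; linarith
    have hcont : ContinuousAt (fun t : ℝ => t ^ (c + (m + 1 : ℕ)) * exp (-a * t)) 0 := by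
      fun_prop (disch := exact Or.inr hexp.le)
    refine hcont.continuousWithinAt.congr (fun t ht => ?_) ?_
    · rw [tailKernel, sub_zero, rpow_add' ht hexp.ne', rpow_natCast]; ring
    · simp only [tailKernel, sub_self, zero_pow m.succ_ne_zero, mul_zero, zero_rpow hexp.ne',
        zero_mul]
  · exact (continuousAt hξ).continuousWithinAt

lemma integrableOn (ha : 0 < a) (hξ : 0 ≤ ξ) (hcm : -1 < c + m) :
    IntegrableOn (tailKernel a ξ c m) (Ioi ξ) := by
  have hdom : IntegrableOn (fun t : ℝ => t ^ (c + m) * exp (-a * t)) (Ioi ξ) := by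
    have := integrableOn_rpow_mul_exp_neg_mul_rpow hcm one_pos ha
    simp only [rpow_one] at this
    exact this.mono_set (Ioi_subset_Ioi hξ)
  refine hdom.mono' ?_ ?_
  · exact ContinuousOn.aestronglyMeasurable
      (fun t ht => (continuousAt (hξ.trans_lt ht)).continuousWithinAt) measurableSet_Ioi
  · filter_upwards [ae_restrict_mem measurableSet_Ioi] with t ht
    rw [Real.norm_of_nonneg (pos hξ ht).le]
    exact le_rpow_mul_exp hξ ht

lemma integral_pos (ha : 0 < a) (hξ : 0 ≤ ξ) (hcm : -1 < c + m) :
    0 < ∫ t in Ioi ξ, tailKernel a ξ c m t := by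
  have hnonneg : 0 ≤ᵐ[volume.restrict (Ioi ξ)] tailKernel a ξ c m := by
    filter_upwards [ae_restrict_mem measurableSet_Ioi] with t ht using (pos hξ ht).le
  have hsupp : Function.support (tailKernel a ξ c m) ∩ Ioi ξ = Ioi ξ :=
    inter_eq_right.2 fun t ht => (pos hξ ht).ne'
  rw [setIntegral_pos_iff_support_of_nonneg_ae hnonneg (integrableOn ha hξ hcm), hsupp,
    Real.volume_Ioi]
  exact ENNReal.zero_lt_top

-- The boundary terms vanish at `ξ` because of the factor `(t - ξ) ^ (m + 1)`.
lemma mul_integral_succ (ha : 0 < a) (hξ : 0 ≤ ξ) (hcm : -1 < c + m) :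
    a * ∫ t in Ioi ξ, tailKernel a ξ c (m + 1) t =
      (m + 1) * (∫ t in Ioi ξ, tailKernel a ξ c m t)
        + c * ∫ t in Ioi ξ, tailKernel a ξ (c - 1) (m + 1) t := by
  have hI₁ : IntegrableOn (fun t => c * tailKernel a ξ (c - 1) (m + 1) t) (Ioi ξ) :=
    (integrableOn ha hξ (by push_cast; linarith)).const_mul c
  have hI₂ : IntegrableOn (fun t => a * tailKernel a ξ c (m + 1) t) (Ioi ξ) :=
    (integrableOn ha hξ (by push_cast; linarith)).const_mul a
  have hI₃ : IntegrableOn (fun t => (m + 1 : ℝ) * tailKernel a ξ c m t) (Ioi ξ) :=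
    (integrableOn ha hξ hcm).const_mul _
  have hI₁₂ : IntegrableOn (fun t => c * tailKernel a ξ (c - 1) (m + 1) t
      - a * tailKernel a ξ c (m + 1) t) (Ioi ξ) := hI₁.sub hI₂
  have hFTC := integral_Ioi_of_hasDerivAt_of_tendsto (continuousWithinAt_succ hξ hcm)
    (fun t ht => hasDerivAt (hξ.trans_lt ht)) (hI₁₂.add hI₃) (tendsto_atTop ha hξ)
  have hξ_zero : tailKernel a ξ c (m + 1) ξ = 0 := by
    simp only [tailKernel, sub_self, zero_pow m.succ_ne_zero, mul_zero]
  rw [integral_add hI₁₂ hI₃, integral_sub hI₁ hI₂, integral_const_mul,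
    integral_const_mul, integral_const_mul, hξ_zero] at hFTC
  linarith

lemma mul_integral_succ_le (ha : 0 < a) (hξ : 0 ≤ ξ) {b : ℝ} (hb : 0 < b) :
    a * ∫ t in Ioi ξ, tailKernel a ξ (b - 1) (m + 1) t ≤
      (m + max 1 b) * ∫ t in Ioi ξ, tailKernel a ξ (b - 1) m t := by
  have hcm : -1 < b - 1 + m := by linarith [m.cast_nonneg (α := ℝ)]
  set I := ∫ t in Ioi ξ, tailKernel a ξ (b - 1) m t
  set J := ∫ t in Ioi ξ, tailKernel a ξ (b - 1 - 1) (m + 1) t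
  have hJ_nonneg : 0 ≤ J := setIntegral_nonneg measurableSet_Ioi fun t ht => (pos hξ ht).le
  have hJ_le : J ≤ I := setIntegral_mono_on (integrableOn ha hξ (by push_cast; linarith))
    (integrableOn ha hξ hcm) measurableSet_Ioi fun t ht => sub_one_succ_le hξ ht
  have hmax : (b - 1) * J ≤ (max 1 b - 1) * I := by
    rcases le_total 1 b with h | h
    · rw [max_eq_right h]
      exact mul_le_mul_of_nonneg_left hJ_le (by linarith)
    · rw [max_eq_left h, sub_self, zero_mul]
      exact mul_nonpos_of_nonpos_of_nonneg (by linarith) hJ_nonneg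
  rw [mul_integral_succ ha hξ hcm]
  linarith

end tailKernel

/-- For `a, b > 0`, `ξ ≥ 0`, `β = max 1 b` and every `n : ℕ`:
`0 < F_(n+1) ≤ ((n + β)/a) F_n`. -/
theorem F_asymptotic_property (a b ξ : ℝ) (ha : 0 < a) (hb : 0 < b) (hξ : 0 ≤ ξ)
    (β : ℝ) (hβ : β = max 1 b) (n : ℕ)
    (F : ℕ → ℝ)
    (hF : ∀ m : ℕ, F m = (1 / Real.Gamma b) *
      ∫ t in Set.Ioi ξ, t ^ (b - 1) * Real.exp (-a * t) * (t - ξ) ^ m) :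
    0 < F (n + 1) ∧ F (n + 1) ≤ (((n : ℝ) + β) / a) * F n := by
  have hF' : ∀ m, F m = (∫ t in Ioi ξ, tailKernel a ξ (b - 1) m t) / Gamma b := fun m => by
    rw [hF, one_div_mul_eq_div]; rfl
  have hΓ : 0 < Gamma b := Gamma_pos_of_pos hb
  have hpos := tailKernel.integral_pos (c := b - 1) (m := n + 1) ha hξ (by push_cast; linarith)
  have hle := tailKernel.mul_integral_succ_le (m := n) ha hξ hb
  rw [← hβ] at hle
  rw [hF', hF']
  refine ⟨div_pos hpos hΓ, ?_⟩
  field_simp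
  linarith
end

section
/- Let $a, b > 0$, $\xi \geq 0$, set $\beta = \max(1, b)$, and let $N$ be a non-negative integer. Then $F_N \leq \frac{\prod_{k=0}^{N-1}(k+\beta)}{a^N} F_0$, where $F_n = \frac{1}{\Gamma(b)} \int_{\xi}^{+\infty} t^{b-1} e^{-a t} (t-\xi)^n \, dt$. In particular $F_N = \mathcal{O}(a^{-N}) F_0$ as $a \to +\infty$, uniformly in $\xi \geq 0$. -/
/-!
With `J n = ∫_ξ^∞ t^(b-1) e^(-a t) (t - ξ)^n dt`, integration by parts gives
`a J (n+1) = (b - 1) K n + (n + 1) J n`, where `K n = ∫_ξ^∞ t^(b-2) e^(-a t) (t - ξ)^(n+1) dt`.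
Since `t - ξ ≤ t` we have `0 ≤ K n ≤ J n`, so `(b - 1) K n ≤ (β - 1) J n` whether `b ≤ 1` or not.
Hence `a J (n+1) ≤ (n + β) J n`, and iterating this from `J 0` gives the bound.
-/

open Real MeasureTheory Set Filter Topology

noncomputable def tailMomentIntegrand (a c ξ : ℝ) (m : ℕ) (t : ℝ) : ℝ :=
  t ^ c * Real.exp (-a * t) * (t - ξ) ^ m

/-- The paper's `F n` is `tailMoment a (b - 1) ξ n / Γ(b)`. -/
noncomputable def tailMoment (a c ξ : ℝ) (m : ℕ) : ℝ :=
  ∫ t in Ioi ξ, tailMomentIntegrand a c ξ m t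

lemma rpow_mul_sub_pow_le_rpow_add {t ξ : ℝ} (c : ℝ) (m : ℕ) (ht : 0 < t) (hξ : 0 ≤ ξ)
    (hξt : ξ ≤ t) : t ^ c * (t - ξ) ^ m ≤ t ^ (c + m) := by
  rw [rpow_add ht, rpow_natCast]
  gcongr
  linarith

section

variable {a c ξ : ℝ}

lemma tailMomentIntegrand_nonneg (hξ : 0 ≤ ξ) (m : ℕ) {t : ℝ} (ht : t ∈ Ioi ξ) :
    0 ≤ tailMomentIntegrand a c ξ m t := by
  have ht₀ : 0 < t := hξ.trans_lt ht
  have hξt : ξ < t := ht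
  unfold tailMomentIntegrand
  positivity

lemma tailMomentIntegrand_le (hξ : 0 ≤ ξ) (m : ℕ) {t : ℝ} (ht : t ∈ Ioi ξ) :
    tailMomentIntegrand a c ξ m t ≤ t ^ (c + m) * Real.exp (-a * t) := by
  have hξt : ξ < t := ht
  unfold tailMomentIntegrand
  rw [mul_right_comm]
  gcongr
  exact rpow_mul_sub_pow_le_rpow_add c m (by linarith) hξ hξt.le

lemma continuousOn_tailMomentIntegrand (hξ : 0 ≤ ξ) (m : ℕ) :
    ContinuousOn (tailMomentIntegrand a c ξ m) (Ioi ξ) := by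
  intro t ht
  have ht₀ : 0 < t := hξ.trans_lt ht
  unfold tailMomentIntegrand
  apply ContinuousAt.continuousWithinAt
  fun_prop (disch := exact Or.inl ht₀.ne')

lemma integrableOn_tailMomentIntegrand (ha : 0 < a) (hξ : 0 ≤ ξ) {m : ℕ} (hcm : -1 < c + m) :
    IntegrableOn (tailMomentIntegrand a c ξ m) (Ioi ξ) := by
  have hdom : IntegrableOn (fun t => t ^ (c + m) * Real.exp (-a * t)) (Ioi ξ) := by
    have := integrableOn_rpow_mul_exp_neg_mul_rpow (p := 1) hcm one_pos ha
    simp only [rpow_one] at this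
    exact this.mono_set (Ioi_subset_Ioi hξ)
  refine hdom.mono' ((continuousOn_tailMomentIntegrand hξ m).aestronglyMeasurable
    measurableSet_Ioi) ?_
  filter_upwards [self_mem_ae_restrict measurableSet_Ioi] with t ht
  rw [norm_of_nonneg (tailMomentIntegrand_nonneg hξ m ht)]
  exact tailMomentIntegrand_le hξ m ht

lemma hasDerivAt_tailMomentIntegrand_succ (n : ℕ) {x : ℝ} (hx : 0 < x) :
    HasDerivAt (tailMomentIntegrand a c ξ (n + 1))
      (c * tailMomentIntegrand a (c - 1) ξ (n + 1) x - a * tailMomentIntegrand a c ξ (n + 1) x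
        + (n + 1) * tailMomentIntegrand a c ξ n x) x := by
  have hpow := hasDerivAt_rpow_const (p := c) (Or.inl hx.ne')
  have hexp := ((hasDerivAt_id x).const_mul (-a)).exp
  have hshift := ((hasDerivAt_id x).sub_const ξ).fun_pow (n + 1)
  refine ((hpow.mul hexp).mul hshift).congr_deriv ?_
  simp only [tailMomentIntegrand, id, Pi.mul_apply]
  push_cast
  ring

lemma continuousWithinAt_tailMomentIntegrand_succ (hc : -1 < c) (hξ : 0 ≤ ξ) (n : ℕ) :
    ContinuousWithinAt (tailMomentIntegrand a c ξ (n + 1)) (Ici ξ) ξ := by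
  rcases hξ.lt_or_eq with hξ | rfl
  · unfold tailMomentIntegrand
    apply ContinuousAt.continuousWithinAt
    fun_prop (disch := exact Or.inl hξ.ne')
  · have hexp : 0 < c + (n + 1 : ℕ) := by push_cast; linarith [(n.cast_nonneg : (0 : ℝ) ≤ n)]
    -- at `ξ = 0` the integrand is `t ^ (c + n + 1) * exp (-a t)` with a positive exponent
    have hcont : ContinuousWithinAt (fun t : ℝ => t ^ (c + (n + 1 : ℕ)) * Real.exp (-a * t))
        (Ici 0) 0 := by
      apply ContinuousAt.continuousWithinAt
      fun_prop (disch := exact Or.inr hexp.le)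
    refine hcont.congr (fun t ht => ?_) ?_
    · simp only [tailMomentIntegrand, sub_zero, rpow_add' (mem_Ici.1 ht) hexp.ne', rpow_natCast]
      ring
    · simp only [tailMomentIntegrand, sub_self, zero_pow n.succ_ne_zero, mul_zero,
        zero_rpow hexp.ne', zero_mul]

lemma tendsto_tailMomentIntegrand_atTop (ha : 0 < a) (hξ : 0 ≤ ξ) (m : ℕ) :
    Tendsto (tailMomentIntegrand a c ξ m) atTop (𝓝 0) := by
  refine squeeze_zero' ?_ ?_ (tendsto_rpow_mul_exp_neg_mul_atTop_nhds_zero (c + m) a ha)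
  · filter_upwards [eventually_gt_atTop ξ] with t ht
    exact tailMomentIntegrand_nonneg hξ m ht
  · filter_upwards [eventually_gt_atTop ξ] with t ht
    exact tailMomentIntegrand_le hξ m ht

/-- Integrate the derivative of `t ^ c e^(-a t) (t - ξ)^(n + 1)`, which vanishes at `ξ` and `∞`. -/
lemma mul_tailMoment_succ (ha : 0 < a) (hc : -1 < c) (hξ : 0 ≤ ξ) (n : ℕ) :
    a * tailMoment a c ξ (n + 1) =
      c * tailMoment a (c - 1) ξ (n + 1) + (n + 1) * tailMoment a c ξ n := by
  have hn : (0 : ℝ) ≤ n := n.cast_nonneg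
  have hint₁ := integrableOn_tailMomentIntegrand (c := c - 1) ha hξ (m := n + 1)
    (by push_cast; linarith)
  have hint₂ := integrableOn_tailMomentIntegrand (c := c) ha hξ (m := n + 1)
    (by push_cast; linarith)
  have hint₃ := integrableOn_tailMomentIntegrand (c := c) ha hξ (m := n) (by linarith)
  have hFTC := integral_Ioi_of_hasDerivAt_of_tendsto
    (continuousWithinAt_tailMomentIntegrand_succ (a := a) hc hξ n)
    (fun x hx => hasDerivAt_tailMomentIntegrand_succ n (hξ.trans_lt hx))
    (((hint₁.const_mul c).sub (hint₂.const_mul a)).add (hint₃.const_mul ((n : ℝ) + 1)))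
    (tendsto_tailMomentIntegrand_atTop ha hξ (n + 1))
  have hint₁₂ : Integrable (fun x => c * tailMomentIntegrand a (c - 1) ξ (n + 1) x -
      a * tailMomentIntegrand a c ξ (n + 1) x) (volume.restrict (Ioi ξ)) :=
    (hint₁.const_mul c).sub (hint₂.const_mul a)
  rw [integral_add hint₁₂ (hint₃.const_mul _),
    integral_sub (hint₁.const_mul c) (hint₂.const_mul a), integral_const_mul,
    integral_const_mul, integral_const_mul] at hFTC
  have hvanish : tailMomentIntegrand a c ξ (n + 1) ξ = 0 := by
    simp [tailMomentIntegrand]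
  rw [hvanish] at hFTC
  unfold tailMoment
  linarith

lemma tailMoment_nonneg (hξ : 0 ≤ ξ) (m : ℕ) : 0 ≤ tailMoment a c ξ m :=
  setIntegral_nonneg measurableSet_Ioi fun _ ht => tailMomentIntegrand_nonneg hξ m ht

lemma tailMoment_sub_one_succ_le (ha : 0 < a) (hξ : 0 ≤ ξ) {n : ℕ} (hcn : -1 < c + n) :
    tailMoment a (c - 1) ξ (n + 1) ≤ tailMoment a c ξ n := by
  refine setIntegral_mono_on (integrableOn_tailMomentIntegrand ha hξ (by push_cast; linarith))
    (integrableOn_tailMomentIntegrand ha hξ hcn) measurableSet_Ioi fun t ht => ?_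
  have hξt : ξ < t := ht
  have hstep := rpow_mul_sub_pow_le_rpow_add (c - 1) 1 (by linarith) hξ hξt.le
  rw [pow_one, Nat.cast_one, sub_add_cancel] at hstep
  calc tailMomentIntegrand a (c - 1) ξ (n + 1) t
      = t ^ (c - 1) * (t - ξ) * (Real.exp (-a * t) * (t - ξ) ^ n) := by
        simp only [tailMomentIntegrand]; ring
    _ ≤ t ^ c * (Real.exp (-a * t) * (t - ξ) ^ n) := by
        gcongr
    _ = tailMomentIntegrand a c ξ n t := by simp only [tailMomentIntegrand]; ring

lemma mul_tailMoment_succ_le (ha : 0 < a) (hc : -1 < c) (hξ : 0 ≤ ξ) {β : ℝ} (hβ₁ : 1 ≤ β)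
    (hβc : c + 1 ≤ β) (n : ℕ) :
    a * tailMoment a c ξ (n + 1) ≤ (n + β) * tailMoment a c ξ n := by
  have hJ := tailMoment_nonneg (a := a) (c := c) hξ n
  have hcK : c * tailMoment a (c - 1) ξ (n + 1) ≤ (β - 1) * tailMoment a c ξ n := by
    rcases le_or_gt c 0 with hc0 | hc0
    · have hK := tailMoment_nonneg (a := a) (c := c - 1) hξ (n + 1)
      nlinarith
    · have hKJ := tailMoment_sub_one_succ_le ha hξ
        (by linarith [(n.cast_nonneg : (0 : ℝ) ≤ n)] : -1 < c + n)
      nlinarith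
  rw [mul_tailMoment_succ ha hc hξ n]
  linarith

end

lemma le_prod_div_pow_mul_of_mul_succ_le {x : ℕ → ℝ} {a β : ℝ} (ha : 0 < a) (hβ : 0 ≤ β)
    (h : ∀ n : ℕ, a * x (n + 1) ≤ (n + β) * x n) (N : ℕ) :
    x N ≤ (∏ k ∈ Finset.range N, ((k : ℝ) + β)) / a ^ N * x 0 := by
  induction N with
  | zero => simp
  | succ n ih =>
    calc x (n + 1) ≤ (n + β) / a * x n := by
          rw [div_mul_eq_mul_div, le_div_iff₀ ha, mul_comm]
          exact h n
      _ ≤ (n + β) / a * ((∏ k ∈ Finset.range n, ((k : ℝ) + β)) / a ^ n * x 0) := by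
          gcongr
      _ = (∏ k ∈ Finset.range (n + 1), ((k : ℝ) + β)) / a ^ (n + 1) * x 0 := by
          rw [Finset.prod_range_succ, pow_succ]
          field_simp

/-- For `a, b > 0`, `ξ ≥ 0`, `β = max 1 b` and every `N : ℕ`:
`F_N ≤ (∏_{k=0}^{N-1} (k + β)) / a^N * F_0`. -/
theorem F_N_estimate (a b ξ : ℝ) (ha : 0 < a) (hb : 0 < b) (hξ : 0 ≤ ξ)
    (β : ℝ) (hβ : β = max 1 b) (N : ℕ)
    (F : ℕ → ℝ)
    (hF : ∀ m : ℕ, F m = (1 / Real.Gamma b) *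
      ∫ t in Set.Ioi ξ, t ^ (b - 1) * Real.exp (-a * t) * (t - ξ) ^ m) :
    F N ≤ (∏ k ∈ Finset.range N, ((k : ℝ) + β)) / a ^ N * F 0 := by
  have hβ₁ : 1 ≤ β := hβ ▸ le_max_left 1 b
  have hβb : b - 1 + 1 ≤ β := by rw [sub_add_cancel, hβ]; exact le_max_right 1 b
  have hmoment := le_prod_div_pow_mul_of_mul_succ_le ha (by linarith)
    (mul_tailMoment_succ_le ha (by linarith) hξ hβ₁ hβb) N
  have hΓ : 0 ≤ 1 / Real.Gamma b := (one_div_pos.2 (Real.Gamma_pos_of_pos hb)).le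
  rw [hF N, hF 0, mul_left_comm]
  exact mul_le_mul_of_nonneg_left hmoment hΓ
end

section
/- Let $b > 0$ with $b \neq 1$, let $\xi > 0$, and let $d_n = f^{(n)}(\xi)/n!$ be the Taylor coefficients at $\xi$ of $f(t) = \left(\frac{1-e^{-t}}{t}\right)^{b-1}$. Then for every non-negative integer $n$, $\xi(n+1)(n+2) d_0 d_{n+2} = \xi \sum_{m=0}^{n} (m+1)\left(n-2m+1+\frac{m-n-1}{b-1}\right) d_{m+1} d_{n-m+1} + \sum_{m=0}^{n} (m+1)\left(n-2m-2-\xi+\frac{m-n}{b-1}\right) d_{m+1} d_{n-m} + \sum_{m=0}^{n} (1-m-b)\, d_m d_{n-m}$. -/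
/-!
For `g t = (1 - exp (-t)) / t` one has `t * g t = 1 - exp (-t)`, whose first two derivatives are
opposite; this is the linear ODE `t g'' + (t + 2) g' + g = 0`. For `β = b - 1 ≠ 0` it turns into the
quadratic ODE `(β⁻¹ - 1) t f'² + (t + 2) f' f + t f'' f + β f² = 0` for `f = g ^ β`. Writing
`t = ξ + (t - ξ)` and taking the `n`-th Taylor coefficient at `ξ` by the Leibniz rule gives a
convolution identity between the `d m`, in which `d (n + 2)` occurs only once, through `f'' f`.
-/

open Real Finset Filter Topology
open scoped Nat ContDiff

section TaylorCoeff

variable {𝕜 : Type*} [NontriviallyNormedField 𝕜] {f g : 𝕜 → 𝕜} {x : 𝕜} {n : ℕ}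

noncomputable def taylorCoeff (f : 𝕜 → 𝕜) (x : 𝕜) (n : ℕ) : 𝕜 := iteratedDeriv n f x / n !

theorem taylorCoeff_add (hf : ContDiffAt 𝕜 n f x) (hg : ContDiffAt 𝕜 n g x) :
    taylorCoeff (fun t => f t + g t) x n = taylorCoeff f x n + taylorCoeff g x n := by
  simp only [taylorCoeff, iteratedDeriv_fun_add hf hg, add_div]

theorem taylorCoeff_const_mul (c : 𝕜) (f : 𝕜 → 𝕜) (x : 𝕜) (n : ℕ) :
    taylorCoeff (fun t => c * f t) x n = c * taylorCoeff f x n := by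
  simp only [taylorCoeff, iteratedDeriv_const_mul_field, mul_div_assoc]

variable [CharZero 𝕜]

theorem taylorCoeff_deriv (f : 𝕜 → 𝕜) (x : 𝕜) (n : ℕ) :
    taylorCoeff (deriv f) x n = (n + 1) * taylorCoeff f x (n + 1) := by
  rw [taylorCoeff, taylorCoeff, ← iteratedDeriv_succ', Nat.factorial_succ]
  push_cast
  field_simp

theorem taylorCoeff_mul (hf : ContDiffAt 𝕜 n f x) (hg : ContDiffAt 𝕜 n g x) :
    taylorCoeff (fun t => f t * g t) x n =
      ∑ m ∈ range (n + 1), taylorCoeff f x m * taylorCoeff g x (n - m) := by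
  rw [taylorCoeff, iteratedDeriv_fun_mul hf hg, sum_div]
  refine sum_congr rfl fun m hm => ?_
  have hmn := mem_range_succ_iff.mp hm
  have hchoose : (n.choose m : 𝕜) ≠ 0 := by exact_mod_cast (Nat.choose_pos hmn).ne'
  simp only [taylorCoeff]
  rw [← Nat.choose_mul_factorial_mul_factorial hmn]
  push_cast
  field_simp

theorem taylorCoeff_sub_id (x : 𝕜) (n : ℕ) :
    taylorCoeff (fun t => t - x) x n = if n = 1 then 1 else 0 := by
  rw [taylorCoeff, iteratedDeriv_fun_sub (by fun_prop) (by fun_prop), iteratedDeriv_fun_id,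
    iteratedDeriv_const]
  rcases n with _ | _ | n <;> simp

theorem taylorCoeff_sub_mul_succ (hg : ContDiffAt 𝕜 (n + 1) g x) :
    taylorCoeff (fun t => (t - x) * g t) x (n + 1) = taylorCoeff g x n := by
  rw [taylorCoeff_mul (by fun_prop) hg, sum_eq_single 1]
  · simp [taylorCoeff_sub_id]
  · intro m _ hm; simp [taylorCoeff_sub_id, hm]
  · simp

theorem taylorCoeff_sub_mul_deriv (hf : ContDiffAt 𝕜 n (deriv f) x) :
    taylorCoeff (fun t => (t - x) * deriv f t) x n = n * taylorCoeff f x n := by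
  rcases n with _ | n
  · simp [taylorCoeff]
  · rw [taylorCoeff_sub_mul_succ hf, taylorCoeff_deriv]
    push_cast; ring

end TaylorCoeff

def odeCoeff {R : Type*} [CommRing R] (γ β x : R) (d : ℕ → R) (n : ℕ) : R :=
  γ * x * ∑ m ∈ range (n + 1), (m + 1) * d (m + 1) * (((n - m : ℕ) + 1) * d (n - m + 1))
  + γ * ∑ m ∈ range (n + 1), (m + 1) * d (m + 1) * ((n - m : ℕ) * d (n - m))
  + (x + 2) * ∑ m ∈ range (n + 1), (m + 1) * d (m + 1) * d (n - m)
  + ∑ m ∈ range (n + 1), m * d m * d (n - m)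
  + x * ∑ m ∈ range (n + 1), (m + 1) * (((m + 1 : ℕ) + 1) * d (m + 1 + 1)) * d (n - m)
  + ∑ m ∈ range (n + 1), m * ((m + 1) * d (m + 1)) * d (n - m)
  + β * ∑ m ∈ range (n + 1), d m * d (n - m)

theorem taylorCoeff_ode {𝕜 : Type*} [NontriviallyNormedField 𝕜] [CharZero 𝕜] {f : 𝕜 → 𝕜} {x : 𝕜}
    (γ β : 𝕜) (hf : ContDiffAt 𝕜 ∞ f x) (n : ℕ) :
    taylorCoeff (fun t => γ * t * deriv f t ^ 2 + (t + 2) * deriv f t * f t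
      + t * deriv (deriv f) t * f t + β * f t ^ 2) x n = odeCoeff γ β x (taylorCoeff f x) n := by
  have hf1 : ContDiffAt 𝕜 ∞ (deriv f) x := hf.derivWithin (by simp)
  have hf2 : ContDiffAt 𝕜 ∞ (deriv (deriv f)) x := hf1.derivWithin (by simp)
  have hle (m : ℕ) : (m : WithTop ℕ∞) ≤ ∞ := WithTop.coe_le_coe.mpr le_top
  have hf0n := hf.of_le (hle n)
  have hf1n := hf1.of_le (hle n)
  have hf2n := hf2.of_le (hle n)
  have hsplit : (fun t => γ * t * deriv f t ^ 2 + (t + 2) * deriv f t * f t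
      + t * deriv (deriv f) t * f t + β * f t ^ 2) = fun t =>
      γ * x * (deriv f t * deriv f t) + γ * (deriv f t * ((t - x) * deriv f t))
      + (x + 2) * (deriv f t * f t) + (t - x) * deriv f t * f t
      + x * (deriv (deriv f) t * f t) + (t - x) * deriv (deriv f) t * f t
      + β * (f t * f t) := by
    funext t; ring
  have hsub1 (m : ℕ) := taylorCoeff_sub_mul_deriv (hf1.of_le (hle m))
  have hsub2 (m : ℕ) := taylorCoeff_sub_mul_deriv (hf2.of_le (hle m))
  rw [hsplit]
  simp (disch := fun_prop) only [taylorCoeff_add, taylorCoeff_const_mul, taylorCoeff_mul,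
    hsub1, hsub2, taylorCoeff_deriv]
  rfl

theorem recurrence_of_odeCoeff_eq_zero {K : Type*} [Field K] (b x : K) (d : ℕ → K) (n : ℕ)
    (h : odeCoeff ((b - 1)⁻¹ - 1) (b - 1) x d n = 0) :
    x * ((n : K) + 1) * ((n : K) + 2) * d 0 * d (n + 2) =
      x * ∑ m ∈ range (n + 1), ((m : K) + 1) *
            ((n : K) - 2 * (m : K) + 1 + ((m : K) - (n : K) - 1) / (b - 1)) *
            d (m + 1) * d (n - m + 1)
      + ∑ m ∈ range (n + 1), ((m : K) + 1) *
            ((n : K) - 2 * (m : K) - 2 - x + ((m : K) - (n : K)) / (b - 1)) *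
            d (m + 1) * d (n - m)
      + ∑ m ∈ range (n + 1), (1 - (m : K) - b) * d m * d (n - m) := by
  have cast_sub {m : ℕ} (hm : m ∈ range (n + 1)) : ((n - m : ℕ) : K) = n - m :=
    Nat.cast_sub (mem_range_succ_iff.mp hm)
  have hC : ∑ m ∈ range (n + 1), ((m : K) + 1) * (((m + 1 : ℕ) + 1) * d (m + 1 + 1)) * d (n - m)
      = ((n : K) + 1) * ((n : K) + 2) * d 0 * d (n + 2)
        + ∑ m ∈ range (n + 1), (m : K) * ((m + 1) * d (m + 1)) * d (n - m + 1) := by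
    rw [sum_range_succ, sum_range_succ' _ n, Nat.sub_self]
    simp only [Nat.cast_zero, zero_mul, add_zero]
    rw [add_comm]
    congr 1
    · push_cast; ring
    · refine sum_congr rfl fun m hm => ?_
      rw [show n - (m + 1) + 1 = n - m by have := mem_range.mp hm; omega]
      push_cast; ring
  have h1 : ∑ m ∈ range (n + 1), ((m : K) + 1) *
        ((n : K) - 2 * (m : K) + 1 + ((m : K) - (n : K) - 1) / (b - 1)) * d (m + 1) * d (n - m + 1)
      = -((b - 1)⁻¹ - 1)
            * ∑ m ∈ range (n + 1), (m + 1) * d (m + 1) * (((n - m : ℕ) + 1) * d (n - m + 1))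
        - ∑ m ∈ range (n + 1), (m : K) * ((m + 1) * d (m + 1)) * d (n - m + 1) := by
    rw [mul_sum, ← sum_sub_distrib]
    refine sum_congr rfl fun m hm => ?_
    rw [cast_sub hm]; ring
  have h2 : ∑ m ∈ range (n + 1), ((m : K) + 1) *
        ((n : K) - 2 * (m : K) - 2 - x + ((m : K) - (n : K)) / (b - 1)) * d (m + 1) * d (n - m)
      = -((b - 1)⁻¹ - 1) * ∑ m ∈ range (n + 1), (m + 1) * d (m + 1) * ((n - m : ℕ) * d (n - m))
        - (x + 2) * ∑ m ∈ range (n + 1), (m + 1) * d (m + 1) * d (n - m)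
        - ∑ m ∈ range (n + 1), m * ((m + 1) * d (m + 1)) * d (n - m) := by
    rw [mul_sum, mul_sum, ← sum_sub_distrib, ← sum_sub_distrib]
    refine sum_congr rfl fun m hm => ?_
    rw [cast_sub hm]; ring
  have h3 : ∑ m ∈ range (n + 1), (1 - (m : K) - b) * d m * d (n - m)
      = -∑ m ∈ range (n + 1), m * d m * d (n - m)
        - (b - 1) * ∑ m ∈ range (n + 1), d m * d (n - m) := by
    rw [mul_sum, ← sum_neg_distrib, ← sum_sub_distrib]
    refine sum_congr rfl fun m _ => ?_
    ring
  rw [odeCoeff, hC] at h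
  rw [h1, h2, h3]
  linear_combination h

theorem deriv_rpow_const_eventuallyEq {g : ℝ → ℝ} {U : Set ℝ} (hU : IsOpen U)
    (hg : DifferentiableOn ℝ g U) (hne : ∀ t ∈ U, g t ≠ 0) (β : ℝ) {t : ℝ} (ht : t ∈ U) :
    deriv (fun s => g s ^ β) =ᶠ[𝓝 t] fun s => deriv g s * β * g s ^ (β - 1) := by
  filter_upwards [hU.mem_nhds ht] with s hs
  exact ((hg.differentiableAt (hU.mem_nhds hs)).hasDerivAt.rpow_const (.inl (hne s hs))).deriv

theorem rpow_ode_of_linear_ode {g f : ℝ → ℝ} {U : Set ℝ} (hU : IsOpen U) (hg : ContDiffOn ℝ 2 g U)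
    (hne : ∀ t ∈ U, g t ≠ 0)
    (hode : ∀ t ∈ U, t * deriv (deriv g) t + (t + 2) * deriv g t + g t = 0)
    {β : ℝ} (hβ : β ≠ 0) (hf : ∀ t, f t = g t ^ β) {t : ℝ} (ht : t ∈ U) :
    (β⁻¹ - 1) * t * deriv f t ^ 2 + (t + 2) * deriv f t * f t
      + t * deriv (deriv f) t * f t + β * f t ^ 2 = 0 := by
  obtain rfl : f = fun s => g s ^ β := funext hf
  have hg1 : DifferentiableOn ℝ g U := hg.differentiableOn (by norm_num)
  have hg2 : DifferentiableOn ℝ (deriv g) U :=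
    (hg.deriv_of_isOpen hU (m := 1) (by norm_num)).differentiableOn (by norm_num)
  have hd1 := deriv_rpow_const_eventuallyEq hU hg1 hne β ht
  have hd2 : HasDerivAt (fun s => deriv g s * β * g s ^ (β - 1))
      (deriv (deriv g) t * β * g t ^ (β - 1)
        + deriv g t * β * (deriv g t * (β - 1) * g t ^ (β - 1 - 1))) t :=
    (((hg2.differentiableAt (hU.mem_nhds ht)).hasDerivAt.mul_const β).mul
      ((hg1.differentiableAt (hU.mem_nhds ht)).hasDerivAt.rpow_const (.inl (hne t ht))))
  rw [hd1.self_of_nhds, hd1.deriv_eq, hd2.deriv]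
  have := hne t ht
  simp only [rpow_sub_one this]
  field_simp
  linear_combination (β * (g t ^ β) ^ 2 * g t) * hode t ht

noncomputable def oneSubExpNegDiv (t : ℝ) : ℝ := (1 - exp (-t)) / t

theorem oneSubExpNegDiv_pos {t : ℝ} (ht : t ≠ 0) : 0 < oneSubExpNegDiv t := by
  rcases ht.lt_or_gt with ht | ht
  · exact div_pos_of_neg_of_neg (by linarith [one_lt_exp_iff.mpr (neg_pos.mpr ht)]) ht
  · exact div_pos (by linarith [exp_lt_one_iff.mpr (neg_neg_of_pos ht)]) ht

theorem contDiffOn_oneSubExpNegDiv : ContDiffOn ℝ ∞ oneSubExpNegDiv {0}ᶜ := by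
  unfold oneSubExpNegDiv
  fun_prop (disch := exact fun _ => id)

theorem hasDerivAt_oneSubExpNegDiv {t : ℝ} (ht : t ≠ 0) :
    HasDerivAt oneSubExpNegDiv ((exp (-t) - oneSubExpNegDiv t) / t) t := by
  have h := ((hasDerivAt_neg t).exp.const_sub 1).fun_div (hasDerivAt_id' t) ht
  refine h.congr_deriv ?_
  simp only [oneSubExpNegDiv]
  field_simp

theorem oneSubExpNegDiv_ode {t : ℝ} (ht : t ≠ 0) :
    t * deriv (deriv oneSubExpNegDiv) t + (t + 2) * deriv oneSubExpNegDiv t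
      + oneSubExpNegDiv t = 0 := by
  have hd : deriv oneSubExpNegDiv =ᶠ[𝓝 t] fun s => (exp (-s) - oneSubExpNegDiv s) / s := by
    filter_upwards [isOpen_compl_singleton.mem_nhds ht] with s hs
    exact (hasDerivAt_oneSubExpNegDiv hs).deriv
  have hd2 := ((hasDerivAt_neg t).exp.fun_sub (hasDerivAt_oneSubExpNegDiv ht)).fun_div
    (hasDerivAt_id' t) ht
  rw [hd.deriv_eq, hd2.deriv, hd.self_of_nhds]
  simp only [oneSubExpNegDiv]
  field_simp
  ring

theorem d_recurrence_general (b ξ : ℝ) (hb1 : b ≠ 1) (hξ : 0 < ξ)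
    (f : ℝ → ℝ) (hf : ∀ t : ℝ, f t = ((1 - Real.exp (-t)) / t) ^ (b - 1))
    (d : ℕ → ℝ) (hd : ∀ n : ℕ, d n = iteratedDeriv n f ξ / (Nat.factorial n : ℝ)) :
    ∀ n : ℕ,
      ξ * ((n : ℝ) + 1) * ((n : ℝ) + 2) * d 0 * d (n + 2) =
        ξ * ∑ m ∈ Finset.range (n + 1), ((m : ℝ) + 1) *
              ((n : ℝ) - 2 * (m : ℝ) + 1 + ((m : ℝ) - (n : ℝ) - 1) / (b - 1)) *
              d (m + 1) * d (n - m + 1)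
        + ∑ m ∈ Finset.range (n + 1), ((m : ℝ) + 1) *
              ((n : ℝ) - 2 * (m : ℝ) - 2 - ξ + ((m : ℝ) - (n : ℝ)) / (b - 1)) *
              d (m + 1) * d (n - m)
        + ∑ m ∈ Finset.range (n + 1), (1 - (m : ℝ) - b) * d m * d (n - m) := by
  intro n
  have hU : IsOpen ({0}ᶜ : Set ℝ) := isOpen_compl_singleton
  have hξU : ξ ∈ ({0}ᶜ : Set ℝ) := hξ.ne'
  have hf_smooth : ContDiffAt ℝ ∞ f ξ := by
    rw [funext hf]
    exact ((contDiffOn_oneSubExpNegDiv.contDiffAt (hU.mem_nhds hξU)).rpow_const_of_ne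
      (oneSubExpNegDiv_pos hξ.ne').ne')
  have hode : (fun t => ((b - 1)⁻¹ - 1) * t * deriv f t ^ 2 + (t + 2) * deriv f t * f t
      + t * deriv (deriv f) t * f t + (b - 1) * f t ^ 2) =ᶠ[𝓝 ξ] fun _ => 0 := by
    filter_upwards [hU.mem_nhds hξU] with t ht
    exact rpow_ode_of_linear_ode hU
      (contDiffOn_oneSubExpNegDiv.of_le (WithTop.coe_le_coe.mpr le_top))
      (fun s hs => (oneSubExpNegDiv_pos hs).ne') (fun s hs => oneSubExpNegDiv_ode hs)
      (sub_ne_zero.mpr hb1) hf ht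
  have hcoeff : odeCoeff ((b - 1)⁻¹ - 1) (b - 1) ξ d n = 0 := by
    obtain rfl : d = taylorCoeff f ξ := funext hd
    rw [← taylorCoeff_ode _ _ hf_smooth, taylorCoeff, hode.iteratedDeriv_eq, iteratedDeriv_const]
    simp
  exact recurrence_of_odeCoeff_eq_zero b ξ d n hcoeff

/-- Recurrence relation for the Taylor coefficients `d_n` of
`f(t) = ((1 - e^(-t))/t)^(b-1)` at `ξ > 0`, for `b > 0`, `b ≠ 1`. -/
theorem d_recurrence (b ξ : ℝ) (hb : 0 < b) (hb1 : b ≠ 1) (hξ : 0 < ξ)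
    (f : ℝ → ℝ) (hf : ∀ t : ℝ, f t = ((1 - Real.exp (-t)) / t) ^ (b - 1))
    (d : ℕ → ℝ) (hd : ∀ n : ℕ, d n = iteratedDeriv n f ξ / (Nat.factorial n : ℝ)) :
    ∀ n : ℕ,
      ξ * ((n : ℝ) + 1) * ((n : ℝ) + 2) * d 0 * d (n + 2) =
        ξ * ∑ m ∈ Finset.range (n + 1), ((m : ℝ) + 1) *
              ((n : ℝ) - 2 * (m : ℝ) + 1 + ((m : ℝ) - (n : ℝ) - 1) / (b - 1)) *
              d (m + 1) * d (n - m + 1)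
        + ∑ m ∈ Finset.range (n + 1), ((m : ℝ) + 1) *
              ((n : ℝ) - 2 * (m : ℝ) - 2 - ξ + ((m : ℝ) - (n : ℝ)) / (b - 1)) *
              d (m + 1) * d (n - m)
        + ∑ m ∈ Finset.range (n + 1), (1 - (m : ℝ) - b) * d m * d (n - m) :=
  d_recurrence_general b ξ hb1 hξ f hf d hd
end

section
/- Let $b > 0$ be fixed and let $N \geq 1$ be a fixed integer. There exist constants $C > 0$ and $A > 0$, depending only on $N$ and $b$, such that for all $a \geq A$ and all $x \in (0,1]$, with $\xi = -\ln x$, $\left| I_x(a,b) - \frac{\Gamma(a+b)}{\Gamma(a)} \sum_{n=0}^{N-1} d_n F_n \right| \leq C\, a^{-N}\, \frac{\Gamma(a+b)}{\Gamma(a)}\, F_0$, where $d_n = f^{(n)}(\xi)/n!$ are the Taylor coefficients at $\xi$ of $f(t) = \left(\frac{1-e^{-t}}{t}\right)^{b-1}$ and $F_n = \frac{1}{\Gamma(b)} \int_{\xi}^{+\infty} t^{b-1} e^{-a t} (t-\xi)^n\, dt$. -/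
/-!
Substituting `u = exp (-t)` turns `B(a, b) I_x(a, b)` into `∫_ξ^∞ t ^ (b - 1) exp (-a t) f(t) dt`,
so the expansion is the term-by-term integral of the Taylor polynomial of `f` at `ξ`. By Taylor's
theorem the error is at most `sup_{t ≥ 0} |f⁽ᴺ⁾(t)| / (N - 1)! · F_N`, and `F_N ≤ C a⁻ᴺ F_0`
uniformly in `ξ ≥ 0`: bound `(t - ξ)ᴺ` by `N! (2 / a)ᴺ exp (a (t - ξ) / 2)` and compare
`∫ t ^ (b - 1) exp (-a (t + ξ) / 2)` with `F_0` through the substitution `t = 2u - ξ`.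

The delicate point is that `f⁽ᴺ⁾` is bounded on `[0, ∞)` for `N ≥ 1` although `f` grows like
`t ^ (1 - b)` when `b < 1`. On `(0, ∞)`, `f(t) = t ^ (1 - b) (1 - exp (-t)) ^ (b - 1)`, and its
derivatives stay in the span of `t ^ q A (exp (-t))` (`q ≤ -b`) and `t ^ q exp (-t) A (exp (-t))`
(`q ≤ 1 - b`), `A` smooth on `(-∞, 1)`, all of which are bounded on `[1, ∞)`. Smoothness of `f`
at `0` comes from writing `(1 - exp (-t)) / t` as a `dslope`.
-/

open Real MeasureTheory Set Filter Topology
open scoped ContDiff Nat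

namespace IncompleteBeta

lemma contDiff_dslope_one_sub_exp_neg : ContDiff ℝ ∞ (dslope (fun t => 1 - exp (-t)) 0) := by
  refine contDiff_iff_contDiffAt.2 fun t => ?_
  rcases eq_or_ne t 0 with rfl | ht
  · obtain ⟨p, hp⟩ : AnalyticAt ℝ (fun t => 1 - exp (-t)) 0 := by fun_prop
    exact hp.has_fpower_series_dslope_fslope.analyticAt.contDiffAt
  · refine ContDiffAt.congr_of_eventuallyEq ?_ (dslope_eventuallyEq_slope_of_ne _ ht)
    simp only [slope_fun_def_field, sub_zero]
    exact ContDiffAt.div (by fun_prop) contDiffAt_id ht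

lemma dslope_one_sub_exp_neg_pos (t : ℝ) : 0 < dslope (fun t => 1 - exp (-t)) 0 t := by
  rcases eq_or_ne t 0 with rfl | ht
  · rw [dslope_same, ((hasDerivAt_neg 0).exp.const_sub 1).deriv]
    simp
  · rw [dslope_of_ne _ ht, slope_def_field, neg_zero, exp_zero, sub_self, sub_zero, sub_zero]
    rcases ht.lt_or_gt with ht | ht
    · exact div_pos_of_neg_of_neg (by simp [ht]) ht
    · exact div_pos (by simp [ht]) ht

noncomputable def rpowMulCompExpNeg (q : ℝ) (A : ℝ → ℝ) (t : ℝ) : ℝ := t ^ q * A (exp (-t))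

lemma hasDerivAt_rpowMulCompExpNeg {q t : ℝ} {A : ℝ → ℝ} (ht : 0 < t)
    (hA : DifferentiableAt ℝ A (exp (-t))) :
    HasDerivAt (rpowMulCompExpNeg q A)
      ((q • rpowMulCompExpNeg (q - 1) A + rpowMulCompExpNeg q fun x => x * -deriv A x) t) t := by
  have hexp : HasDerivAt (fun t => exp (-t)) (-exp (-t)) t := by
    simpa using (hasDerivAt_neg t).exp
  refine ((hasDerivAt_rpow_const (Or.inl ht.ne')).mul (hA.hasDerivAt.comp t hexp)).congr_deriv ?_
  simp only [rpowMulCompExpNeg, Pi.add_apply, Pi.smul_apply, smul_eq_mul, Function.comp_apply]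
  ring

lemma contDiffOn_one_sub_rpow (p : ℝ) : ContDiffOn ℝ ∞ (fun x : ℝ => (1 - x) ^ p) (Iio 1) :=
  fun _ hx => ((contDiffAt_const.sub contDiffAt_id).rpow_const_of_ne
    (sub_ne_zero.2 (ne_of_gt hx))).contDiffWithinAt

section
variable {b : ℝ}

def tame (b : ℝ) : Submodule ℝ (ℝ → ℝ) := Submodule.span ℝ
  ({g | ∃ q A, q ≤ -b ∧ ContDiffOn ℝ ∞ A (Iio 1) ∧ g = rpowMulCompExpNeg q A} ∪
    {g | ∃ q A, q ≤ 1 - b ∧ ContDiffOn ℝ ∞ A (Iio 1) ∧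
      g = rpowMulCompExpNeg q fun x => x * A x})

lemma rpowMulCompExpNeg_mem_tame {q : ℝ} {A : ℝ → ℝ} (hq : q ≤ -b)
    (hA : ContDiffOn ℝ ∞ A (Iio 1)) : rpowMulCompExpNeg q A ∈ tame b :=
  Submodule.subset_span (Or.inl ⟨q, A, hq, hA, rfl⟩)

lemma rpowMulCompExpNeg_mul_mem_tame {q : ℝ} {A : ℝ → ℝ} (hq : q ≤ 1 - b)
    (hA : ContDiffOn ℝ ∞ A (Iio 1)) : (rpowMulCompExpNeg q fun x => x * A x) ∈ tame b :=
  Submodule.subset_span (Or.inr ⟨q, A, hq, hA, rfl⟩)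

lemma contDiffOn_neg_deriv {A : ℝ → ℝ} (hA : ContDiffOn ℝ ∞ A (Iio 1)) :
    ContDiffOn ℝ ∞ (fun x => -deriv A x) (Iio 1) :=
  (hA.deriv_of_isOpen isOpen_Iio le_rfl).neg

lemma differentiableAt_exp_neg_of_contDiffOn {A : ℝ → ℝ} (hA : ContDiffOn ℝ ∞ A (Iio 1)) {t : ℝ}
    (ht : 0 < t) : DifferentiableAt ℝ A (exp (-t)) :=
  (hA.differentiableOn (by simp)).differentiableAt
    (isOpen_Iio.mem_nhds (exp_lt_one_iff.2 (neg_lt_zero.2 ht)))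

lemma exists_hasDerivAt_mem_tame {E : ℝ → ℝ} (hE : E ∈ tame b) :
    ∃ E' ∈ tame b, ∀ t, 0 < t → HasDerivAt E (E' t) t := by
  induction hE using Submodule.span_induction with
  | mem E hE =>
    rcases hE with ⟨q, A, hq, hA, rfl⟩ | ⟨q, A, hq, hA, rfl⟩
    · exact ⟨_, add_mem (Submodule.smul_mem _ _ (rpowMulCompExpNeg_mem_tame (by linarith) hA))
        (rpowMulCompExpNeg_mul_mem_tame (by linarith) (contDiffOn_neg_deriv hA)),
        fun t ht => hasDerivAt_rpowMulCompExpNeg ht (differentiableAt_exp_neg_of_contDiffOn hA ht)⟩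
    · have hB : ContDiffOn ℝ ∞ (fun x => x * A x) (Iio 1) := contDiffOn_id.mul hA
      exact ⟨_, add_mem (Submodule.smul_mem _ _ (rpowMulCompExpNeg_mul_mem_tame (by linarith) hA))
        (rpowMulCompExpNeg_mul_mem_tame hq (contDiffOn_neg_deriv hB)),
        fun t ht => hasDerivAt_rpowMulCompExpNeg ht (differentiableAt_exp_neg_of_contDiffOn hB ht)⟩
  | zero => exact ⟨0, zero_mem _, fun t _ => hasDerivAt_const t 0⟩
  | add E₁ E₂ _ _ h₁ h₂ =>
    obtain ⟨E₁', h₁', hd₁⟩ := h₁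
    obtain ⟨E₂', h₂', hd₂⟩ := h₂
    exact ⟨E₁' + E₂', add_mem h₁' h₂', fun t ht => (hd₁ t ht).add (hd₂ t ht)⟩
  | smul c E _ h =>
    obtain ⟨E', h', hd⟩ := h
    exact ⟨c • E', Submodule.smul_mem _ c h', fun t ht => (hd t ht).const_smul c⟩

lemma exists_abs_comp_exp_neg_le {A : ℝ → ℝ} (hA : ContinuousOn A (Iio 1)) :
    ∃ C, ∀ t, 1 ≤ t → |A (exp (-t))| ≤ C := by
  have hsub : Icc 0 (exp (-1)) ⊆ Iio 1 := fun x hx =>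
    hx.2.trans_lt (exp_lt_one_iff.2 neg_one_lt_zero)
  obtain ⟨C, hC⟩ := isCompact_Icc.exists_bound_of_continuousOn (hA.mono hsub)
  exact ⟨C, fun t ht => hC _ ⟨(exp_pos _).le, exp_le_exp.2 (neg_le_neg ht)⟩⟩

lemma exists_abs_le_of_mem_tame (hb : 0 ≤ b) {E : ℝ → ℝ} (hE : E ∈ tame b) :
    ∃ C, ∀ t, 1 ≤ t → |E t| ≤ C := by
  induction hE using Submodule.span_induction with
  | mem E hE =>
    rcases hE with ⟨q, A, hq, hA, rfl⟩ | ⟨q, A, hq, hA, rfl⟩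
    · obtain ⟨C, hC⟩ := exists_abs_comp_exp_neg_le hA.continuousOn
      refine ⟨C, fun t ht => ?_⟩
      have htq : t ^ q ≤ 1 := rpow_le_one_of_one_le_of_nonpos ht (by linarith)
      rw [rpowMulCompExpNeg, abs_mul, abs_of_nonneg (by positivity)]
      exact (mul_le_of_le_one_left (abs_nonneg _) htq).trans (hC t ht)
    · obtain ⟨C, hC⟩ := exists_abs_comp_exp_neg_le hA.continuousOn
      refine ⟨C, fun t ht => ?_⟩
      have htq : t ^ q * exp (-t) ≤ 1 := by
        calc t ^ q * exp (-t) ≤ t * exp (-t) := by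
              gcongr
              simpa using rpow_le_rpow_of_exponent_le ht (show q ≤ 1 by linarith)
          _ ≤ 1 := by
              rw [exp_neg, ← div_eq_mul_inv, div_le_one (exp_pos t)]
              linarith [add_one_le_exp t]
      rw [rpowMulCompExpNeg, abs_mul, abs_mul, abs_of_nonneg (by positivity),
        abs_of_nonneg (exp_pos _).le, ← mul_assoc]
      exact (mul_le_of_le_one_left (abs_nonneg _) htq).trans (hC t ht)
  | zero => exact ⟨0, fun t _ => by simp⟩
  | add E₁ E₂ _ _ h₁ h₂ =>
    obtain ⟨C₁, hC₁⟩ := h₁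
    obtain ⟨C₂, hC₂⟩ := h₂
    exact ⟨C₁ + C₂, fun t ht => (abs_add_le _ _).trans (add_le_add (hC₁ t ht) (hC₂ t ht))⟩
  | smul c E _ h =>
    obtain ⟨C, hC⟩ := h
    exact ⟨|c| * C, fun t ht => by
      rw [Pi.smul_apply, smul_eq_mul, abs_mul]
      exact mul_le_mul_of_nonneg_left (hC t ht) (abs_nonneg c)⟩

lemma eqOn_deriv_of_eqOn {g E E' : ℝ → ℝ} (hg : EqOn g E (Ioi 0))
    (hE : ∀ t, 0 < t → HasDerivAt E (E' t) t) : EqOn (deriv g) E' (Ioi 0) :=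
  deriv_eqOn isOpen_Ioi fun t ht => ((hE t ht).congr_of_eventuallyEq
    (hg.eventuallyEq_of_mem (isOpen_Ioi.mem_nhds ht))).hasDerivWithinAt

lemma exists_mem_tame_eqOn_iteratedDeriv_succ {g : ℝ → ℝ}
    (hg : EqOn g (rpowMulCompExpNeg (1 - b) fun x => (1 - x) ^ (b - 1)) (Ioi 0)) (n : ℕ) :
    ∃ E ∈ tame b, EqOn (iteratedDeriv (n + 1) g) E (Ioi 0) := by
  induction n with
  | zero =>
    have hA := contDiffOn_one_sub_rpow (b - 1)
    refine ⟨_, add_mem (Submodule.smul_mem _ (1 - b)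
      (rpowMulCompExpNeg_mem_tame (q := 1 - b - 1) (by linarith) hA))
      (rpowMulCompExpNeg_mul_mem_tame le_rfl (contDiffOn_neg_deriv hA)), ?_⟩
    rw [zero_add, iteratedDeriv_one]
    exact eqOn_deriv_of_eqOn hg fun t ht =>
      hasDerivAt_rpowMulCompExpNeg ht (differentiableAt_exp_neg_of_contDiffOn hA ht)
  | succ n ih =>
    obtain ⟨E, hE, hgE⟩ := ih
    obtain ⟨E', hE', hd⟩ := exists_hasDerivAt_mem_tame hE
    exact ⟨E', hE', by rw [iteratedDeriv_succ]; exact eqOn_deriv_of_eqOn hgE hd⟩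

lemma exists_abs_iteratedDeriv_succ_le (hb : 0 ≤ b) {g : ℝ → ℝ} {n : ℕ}
    (hgc : ContDiff ℝ (n + 1) g)
    (hg : EqOn g (rpowMulCompExpNeg (1 - b) fun x => (1 - x) ^ (b - 1)) (Ioi 0)) :
    ∃ M, ∀ t, 0 ≤ t → |iteratedDeriv (n + 1) g t| ≤ M := by
  obtain ⟨E, hE, hgE⟩ := exists_mem_tame_eqOn_iteratedDeriv_succ hg n
  obtain ⟨C, hC⟩ := exists_abs_le_of_mem_tame hb hE
  obtain ⟨M, hM⟩ := isCompact_Icc.exists_bound_of_continuousOn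
    ((hgc.continuous_iteratedDeriv (n + 1) le_rfl).continuousOn (s := Icc 0 1))
  refine ⟨max M C, fun t ht => ?_⟩
  rcases le_total t 1 with ht1 | ht1
  · exact (hM t ⟨ht, ht1⟩).trans (le_max_left _ _)
  · rw [hgE (lt_of_lt_of_le one_pos ht1)]
    exact (hC t ht1).trans (le_max_right _ _)

end

section
variable {b : ℝ} {f : ℝ → ℝ}

lemma eq_dslope_rpow
    (hf : ∀ t : ℝ, f t = if t = 0 then 1 else ((1 - exp (-t)) / t) ^ (b - 1)) :
    f = fun t => dslope (fun t => 1 - exp (-t)) 0 t ^ (b - 1) := by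
  funext t
  rw [hf t]
  split_ifs with ht
  · rw [ht, dslope_same, ((hasDerivAt_neg 0).exp.const_sub 1).deriv]
    simp
  · rw [dslope_of_ne _ ht, slope_def_field]
    simp

lemma contDiff_of_eq_ite
    (hf : ∀ t : ℝ, f t = if t = 0 then 1 else ((1 - exp (-t)) / t) ^ (b - 1)) :
    ContDiff ℝ ∞ f := by
  rw [eq_dslope_rpow hf, contDiff_iff_contDiffAt]
  exact fun t => contDiff_dslope_one_sub_exp_neg.contDiffAt.rpow_const_of_ne
    (dslope_one_sub_exp_neg_pos t).ne'

lemma eqOn_rpowMulCompExpNeg_of_eq_ite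
    (hf : ∀ t : ℝ, f t = if t = 0 then 1 else ((1 - exp (-t)) / t) ^ (b - 1)) :
    EqOn f (rpowMulCompExpNeg (1 - b) fun x => (1 - x) ^ (b - 1)) (Ioi 0) :=
    fun t (ht : 0 < t) => by
  have h1 : 0 ≤ 1 - exp (-t) := sub_nonneg.2 (exp_le_one_iff.2 (neg_nonpos.2 ht.le))
  rw [hf t, if_neg ht.ne', div_rpow h1 ht.le, rpowMulCompExpNeg, show 1 - b = -(b - 1) by ring,
    rpow_neg ht.le, div_eq_inv_mul]

end

lemma abs_sub_sum_taylor_le {g : ℝ → ℝ} {n : ℕ} (hg : ContDiff ℝ (n + 1) g) {ξ t M : ℝ}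
    (hξt : ξ < t) (hM : ∀ y ∈ Icc ξ t, |iteratedDeriv (n + 1) g y| ≤ M) :
    |g t - ∑ k ∈ Finset.range (n + 1), iteratedDeriv k g ξ / k ! * (t - ξ) ^ k|
      ≤ M * (t - ξ) ^ (n + 1) / n ! := by
  have hud := uniqueDiffOn_Icc hξt
  have hwithin : ∀ k ≤ n + 1, ∀ y ∈ Icc ξ t,
      iteratedDerivWithin k g (Icc ξ t) y = iteratedDeriv k g y := fun k hk y hy =>
    iteratedDerivWithin_eq_iteratedDeriv hud ((hg.of_le (by exact_mod_cast hk)).contDiffAt) hy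
  have htaylor : taylorWithinEval g n (Icc ξ t) ξ t
      = ∑ k ∈ Finset.range (n + 1), iteratedDeriv k g ξ / k ! * (t - ξ) ^ k := by
    rw [taylor_within_apply]
    refine Finset.sum_congr rfl fun k hk => ?_
    rw [hwithin k (Finset.mem_range_succ_iff.1 hk |>.trans (Nat.le_succ n)) ξ
      (left_mem_Icc.2 hξt.le), smul_eq_mul]
    ring
  rw [← htaylor, ← Real.norm_eq_abs]
  exact taylor_mean_remainder_bound hξt.le hg.contDiffOn (right_mem_Icc.2 hξt.le)
    fun y hy => by rw [hwithin (n + 1) le_rfl y hy]; exact hM y hy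

lemma integrableOn_rpow_mul_exp_neg_mul_Ioi {s a ξ : ℝ} (hs : -1 < s) (ha : 0 < a) (hξ : 0 ≤ ξ) :
    IntegrableOn (fun t => t ^ s * exp (-a * t)) (Ioi ξ) := by
  have := integrableOn_rpow_mul_exp_neg_mul_rpow hs one_pos ha
  simp only [rpow_one] at this
  exact this.mono_set (Ioi_subset_Ioi hξ)

lemma integrableOn_moment {b a ξ : ℝ} (hb : 0 < b) (ha : 0 < a) (hξ : 0 ≤ ξ) (n : ℕ) :
    IntegrableOn (fun t => t ^ (b - 1) * exp (-a * t) * (t - ξ) ^ n) (Ioi ξ) := by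
  refine Integrable.mono' (integrableOn_rpow_mul_exp_neg_mul_Ioi (s := b - 1 + n)
    (by linarith [n.cast_nonneg (α := ℝ)]) ha hξ) (by fun_prop) ?_
  filter_upwards [ae_restrict_mem measurableSet_Ioi] with t (ht : ξ < t)
  have ht0 : 0 < t := hξ.trans_lt ht
  rw [norm_of_nonneg (by have := sub_pos.2 ht; positivity), rpow_add ht0, rpow_natCast]
  calc t ^ (b - 1) * exp (-a * t) * (t - ξ) ^ n ≤ t ^ (b - 1) * exp (-a * t) * t ^ n := by
        gcongr
        linarith
    _ = t ^ (b - 1) * t ^ n * exp (-a * t) := by ring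

lemma exp_neg_mul_mul_pow_le {a ξ t : ℝ} (ha : 0 < a) (hξt : ξ ≤ t) (N : ℕ) :
    exp (-a * t) * (t - ξ) ^ N ≤ N ! * (2 / a) ^ N * exp (-a * ((t + ξ) / 2)) := by
  have h := pow_div_factorial_le_exp (x := a * (t - ξ) / 2)
    (by have := sub_nonneg.2 hξt; positivity) N
  rw [div_le_iff₀ (by positivity)] at h
  have hexp : exp (-a * ((t + ξ) / 2)) = exp (-a * t) * exp (a * (t - ξ) / 2) := by
    rw [← exp_add]; ring_nf
  calc exp (-a * t) * (t - ξ) ^ N = exp (-a * t) * ((2 / a) ^ N * (a * (t - ξ) / 2) ^ N) := by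
        rw [← mul_pow]; congr 2; field_simp
    _ ≤ exp (-a * t) * ((2 / a) ^ N * (exp (a * (t - ξ) / 2) * N !)) := by gcongr
    _ = N ! * (2 / a) ^ N * exp (-a * ((t + ξ) / 2)) := by rw [hexp]; ring

lemma rpow_le_max_one_mul_rpow {u v c p : ℝ} (hu : 0 < u) (huv : u ≤ v) (hvc : v ≤ c * u) :
    v ^ p ≤ max 1 (c ^ p) * u ^ p := by
  rcases le_total 0 p with hp | hp
  · have hc : 0 < c := pos_of_mul_pos_left (hu.trans_le (huv.trans hvc)) hu.le
    calc v ^ p ≤ (c * u) ^ p := rpow_le_rpow (hu.le.trans huv) hvc hp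
      _ = c ^ p * u ^ p := mul_rpow hc.le hu.le
      _ ≤ max 1 (c ^ p) * u ^ p := by gcongr; exact le_max_right _ _
  · calc v ^ p ≤ u ^ p := rpow_le_rpow_of_nonpos hu huv hp
      _ ≤ max 1 (c ^ p) * u ^ p := le_mul_of_one_le_left (by positivity) (le_max_left _ _)

lemma integral_Ioi_eq_two_mul_integral_comp (h : ℝ → ℝ) (ξ : ℝ) :
    ∫ t in Ioi ξ, h t = 2 * ∫ u in Ioi ξ, h (2 * u - ξ) := by
  have himage : (fun u => 2 * u - ξ) '' Ioi ξ = Ioi ξ := by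
    ext t
    refine ⟨?_, fun ht => ⟨(t + ξ) / 2, by simp only [mem_Ioi] at ht ⊢; linarith, by ring⟩⟩
    rintro ⟨u, hu : ξ < u, rfl⟩
    simp only [mem_Ioi]; linarith
  have hderiv : ∀ u ∈ Ioi ξ, HasDerivWithinAt (fun u => 2 * u - ξ) 2 (Ioi ξ) u := fun u _ =>
    (((hasDerivAt_id u).const_mul 2).sub_const ξ).hasDerivWithinAt.congr_deriv (mul_one 2)
  conv_lhs => rw [← himage]
  rw [integral_image_eq_integral_abs_deriv_smul measurableSet_Ioi hderiv
    (fun u _ v _ huv => by simpa using huv), abs_two, ← integral_const_mul]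
  rfl

lemma integral_rpow_mul_exp_half_le {b a ξ : ℝ} (hb : 0 < b) (ha : 0 < a) (hξ : 0 ≤ ξ) :
    ∫ t in Ioi ξ, t ^ (b - 1) * exp (-a * ((t + ξ) / 2))
      ≤ 2 * max 1 (2 ^ (b - 1)) * ∫ t in Ioi ξ, t ^ (b - 1) * exp (-a * t) := by
  rw [integral_Ioi_eq_two_mul_integral_comp, mul_assoc, ← integral_const_mul (max 1 _)]
  have hw := integrableOn_rpow_mul_exp_neg_mul_Ioi (s := b - 1) (by linarith) ha hξ
  refine mul_le_mul_of_nonneg_left (integral_mono_of_nonneg ?_ (hw.const_mul _) ?_) zero_le_two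
  · filter_upwards [ae_restrict_mem measurableSet_Ioi] with u (hu : ξ < u)
    have : 0 < 2 * u - ξ := by linarith
    positivity
  · filter_upwards [ae_restrict_mem measurableSet_Ioi] with u (hu : ξ < u)
    rw [show (2 * u - ξ + ξ) / 2 = u by ring, ← mul_assoc]
    gcongr
    exact rpow_le_max_one_mul_rpow (hξ.trans_lt hu) (by linarith) (by linarith)

lemma integral_moment_le {b a ξ : ℝ} (hb : 0 < b) (ha : 0 < a) (hξ : 0 ≤ ξ) (N : ℕ) :
    ∫ t in Ioi ξ, t ^ (b - 1) * exp (-a * t) * (t - ξ) ^ N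
      ≤ N ! * (2 / a) ^ N * (2 * max 1 (2 ^ (b - 1))) *
          ∫ t in Ioi ξ, t ^ (b - 1) * exp (-a * t) := by
  have hhalf : IntegrableOn (fun t => t ^ (b - 1) * exp (-a * ((t + ξ) / 2))) (Ioi ξ) := by
    refine IntegrableOn.congr_fun (((integrableOn_rpow_mul_exp_neg_mul_Ioi (s := b - 1)
      (by linarith) (half_pos ha) hξ).const_mul (exp (-a * ξ / 2)))) (fun t _ => ?_)
      measurableSet_Ioi
    rw [mul_left_comm, ← exp_add]
    ring_nf
  calc ∫ t in Ioi ξ, t ^ (b - 1) * exp (-a * t) * (t - ξ) ^ N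
      ≤ ∫ t in Ioi ξ, N ! * (2 / a) ^ N * (t ^ (b - 1) * exp (-a * ((t + ξ) / 2))) := by
        refine integral_mono_of_nonneg ?_ (hhalf.const_mul _) ?_
        · filter_upwards [ae_restrict_mem measurableSet_Ioi] with t (ht : ξ < t)
          have := sub_pos.2 ht
          have := hξ.trans_lt ht
          positivity
        · filter_upwards [ae_restrict_mem measurableSet_Ioi] with t (ht : ξ < t)
          have := hξ.trans_lt ht
          calc t ^ (b - 1) * exp (-a * t) * (t - ξ) ^ N
              = t ^ (b - 1) * (exp (-a * t) * (t - ξ) ^ N) := mul_assoc _ _ _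
            _ ≤ t ^ (b - 1) * (N ! * (2 / a) ^ N * exp (-a * ((t + ξ) / 2))) :=
                mul_le_mul_of_nonneg_left (exp_neg_mul_mul_pow_le ha ht.le N) (by positivity)
            _ = N ! * (2 / a) ^ N * (t ^ (b - 1) * exp (-a * ((t + ξ) / 2))) := by ring
    _ = N ! * (2 / a) ^ N * ∫ t in Ioi ξ, t ^ (b - 1) * exp (-a * ((t + ξ) / 2)) :=
        integral_const_mul _ _
    _ ≤ N ! * (2 / a) ^ N *
          (2 * max 1 (2 ^ (b - 1)) * ∫ t in Ioi ξ, t ^ (b - 1) * exp (-a * t)) := by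
        gcongr
        exact integral_rpow_mul_exp_half_le hb ha hξ
    _ = _ := by ring

lemma abs_integral_sub_sum_le {b a ξ M : ℝ} {f : ℝ → ℝ} {n : ℕ} (hb : 0 < b) (ha : 0 < a)
    (hξ : 0 ≤ ξ) (hf : ContDiff ℝ (n + 1) f)
    (hM : ∀ t, 0 ≤ t → |iteratedDeriv (n + 1) f t| ≤ M) :
    |(∫ t in Ioi ξ, t ^ (b - 1) * exp (-a * t) * f t) -
        ∑ k ∈ Finset.range (n + 1), iteratedDeriv k f ξ / k ! *
          ∫ t in Ioi ξ, t ^ (b - 1) * exp (-a * t) * (t - ξ) ^ k|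
      ≤ M / n ! * ∫ t in Ioi ξ, t ^ (b - 1) * exp (-a * t) * (t - ξ) ^ (n + 1) := by
  set T : ℝ → ℝ := fun t => ∑ k ∈ Finset.range (n + 1), iteratedDeriv k f ξ / k ! * (t - ξ) ^ k
  have hmoment := integrableOn_moment hb ha hξ
  have hrem : ∀ t ∈ Ioi ξ, ‖t ^ (b - 1) * exp (-a * t) * (f t - T t)‖
      ≤ M / n ! * (t ^ (b - 1) * exp (-a * t) * (t - ξ) ^ (n + 1)) := fun t (ht : ξ < t) => by
    have := hξ.trans_lt ht
    rw [norm_mul, norm_of_nonneg (by positivity), Real.norm_eq_abs]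
    calc t ^ (b - 1) * exp (-a * t) * |f t - T t|
        ≤ t ^ (b - 1) * exp (-a * t) * (M * (t - ξ) ^ (n + 1) / n !) := by
          gcongr
          exact abs_sub_sum_taylor_le hf ht fun y hy => hM y (hξ.trans hy.1)
      _ = M / n ! * (t ^ (b - 1) * exp (-a * t) * (t - ξ) ^ (n + 1)) := by ring
  have hremint : IntegrableOn (fun t => t ^ (b - 1) * exp (-a * t) * (f t - T t)) (Ioi ξ) := by
    have := hf.continuous.measurable
    exact Integrable.mono' ((hmoment (n + 1)).const_mul _) (by fun_prop)
      ((ae_restrict_iff' measurableSet_Ioi).2 (Eventually.of_forall hrem))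
  have hsplit : (fun t => t ^ (b - 1) * exp (-a * t) * f t) = fun t =>
      t ^ (b - 1) * exp (-a * t) * (f t - T t) + ∑ k ∈ Finset.range (n + 1),
        iteratedDeriv k f ξ / k ! * (t ^ (b - 1) * exp (-a * t) * (t - ξ) ^ k) := by
    funext t
    have : t ^ (b - 1) * exp (-a * t) * T t = ∑ k ∈ Finset.range (n + 1),
        iteratedDeriv k f ξ / k ! * (t ^ (b - 1) * exp (-a * t) * (t - ξ) ^ k) := by
      rw [Finset.mul_sum]
      exact Finset.sum_congr rfl fun k _ => by ring
    rw [← this]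
    ring
  rw [hsplit, integral_add hremint (integrable_finsetSum _ fun k _ => (hmoment k).const_mul _),
    integral_finsetSum _ fun k _ => (hmoment k).const_mul _]
  simp only [integral_const_mul, add_sub_cancel_right]
  rw [← integral_const_mul, ← Real.norm_eq_abs]
  exact norm_integral_le_of_norm_le ((hmoment (n + 1)).const_mul _)
    ((ae_restrict_iff' measurableSet_Ioi).2 (Eventually.of_forall hrem))

lemma exists_abs_integral_sub_sum_le {b : ℝ} {f : ℝ → ℝ} {n : ℕ} (hb : 0 < b)
    (hf : ContDiff ℝ (n + 1) f)
    (hfeq : EqOn f (rpowMulCompExpNeg (1 - b) fun x => (1 - x) ^ (b - 1)) (Ioi 0)) :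
    ∃ C, 0 < C ∧ ∀ a, 0 < a → ∀ ξ, 0 ≤ ξ →
      |(∫ t in Ioi ξ, t ^ (b - 1) * exp (-a * t) * f t) -
          ∑ k ∈ Finset.range (n + 1), iteratedDeriv k f ξ / k ! *
            ∫ t in Ioi ξ, t ^ (b - 1) * exp (-a * t) * (t - ξ) ^ k|
        ≤ C * a ^ (-((n + 1 : ℕ) : ℝ)) * ∫ t in Ioi ξ, t ^ (b - 1) * exp (-a * t) := by
  obtain ⟨M, hM⟩ := exists_abs_iteratedDeriv_succ_le hb.le hf hfeq
  have hM0 : 0 ≤ M := (abs_nonneg _).trans (hM 0 le_rfl)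
  set K := M / n ! * ((n + 1) ! * 2 ^ (n + 1) * (2 * max 1 (2 ^ (b - 1))))
  refine ⟨max K 1, lt_max_of_lt_right one_pos, fun a ha ξ hξ => ?_⟩
  have hF₀ : 0 ≤ ∫ t in Ioi ξ, t ^ (b - 1) * exp (-a * t) :=
    setIntegral_nonneg measurableSet_Ioi fun t (ht : ξ < t) => by
      have := hξ.trans_lt ht
      positivity
  have hpow : (2 / a) ^ (n + 1) = 2 ^ (n + 1) * a ^ (-((n + 1 : ℕ) : ℝ)) := by
    rw [rpow_neg ha.le, rpow_natCast, div_pow, div_eq_mul_inv]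
  calc _ ≤ M / n ! * ∫ t in Ioi ξ, t ^ (b - 1) * exp (-a * t) * (t - ξ) ^ (n + 1) :=
        abs_integral_sub_sum_le hb ha hξ hf hM
    _ ≤ M / n ! * ((n + 1) ! * (2 / a) ^ (n + 1) * (2 * max 1 (2 ^ (b - 1))) *
          ∫ t in Ioi ξ, t ^ (b - 1) * exp (-a * t)) := by
        gcongr
        exact integral_moment_le hb ha hξ (n + 1)
    _ = K * a ^ (-((n + 1 : ℕ) : ℝ)) * ∫ t in Ioi ξ, t ^ (b - 1) * exp (-a * t) := by
        rw [hpow]; ring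
    _ ≤ max K 1 * a ^ (-((n + 1 : ℕ) : ℝ)) * ∫ t in Ioi ξ, t ^ (b - 1) * exp (-a * t) := by
        gcongr
        exact le_max_left _ _

lemma integral_Ioc_eq_integral_Ioi_comp_exp_neg (g : ℝ → ℝ) {x : ℝ} (hx : 0 < x) :
    ∫ u in Ioc 0 x, g u = ∫ s in Ioi (-log x), exp (-s) * g (exp (-s)) := by
  conv_lhs => rw [← exp_log hx, ← image_exp_Iic]
  rw [integral_image_eq_integral_abs_deriv_smul measurableSet_Iic
    (fun s _ => (hasDerivAt_exp s).hasDerivWithinAt) exp_injective.injOn,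
    integral_comp_neg_Ioi (-log x) (fun s => exp s * g (exp s)), neg_neg]
  simp only [abs_exp, smul_eq_mul]

lemma integral_rpow_mul_one_sub_rpow_eq {a b x : ℝ} {f : ℝ → ℝ}
    (hfeq : EqOn f (rpowMulCompExpNeg (1 - b) fun x => (1 - x) ^ (b - 1)) (Ioi 0))
    (hx0 : 0 < x) (hx1 : x ≤ 1) :
    ∫ t in (0 : ℝ)..x, t ^ (a - 1) * (1 - t) ^ (b - 1)
      = ∫ s in Ioi (-log x), s ^ (b - 1) * exp (-a * s) * f s := by
  rw [intervalIntegral.integral_of_le hx0.le, integral_Ioc_eq_integral_Ioi_comp_exp_neg _ hx0]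
  refine setIntegral_congr_fun measurableSet_Ioi fun s (hs : -log x < s) => ?_
  have hs0 : 0 < s := (neg_nonneg.2 (log_nonpos hx0.le hx1)).trans_lt hs
  have hss : s ^ (b - 1) * s ^ (1 - b) = 1 := by rw [← rpow_add hs0]; simp
  rw [hfeq hs0, rpowMulCompExpNeg, ← exp_mul]
  calc exp (-s) * (exp (-s * (a - 1)) * (1 - exp (-s)) ^ (b - 1))
      = exp (-s + -s * (a - 1)) * (1 - exp (-s)) ^ (b - 1) := by rw [exp_add]; ring
    _ = s ^ (b - 1) * s ^ (1 - b) * exp (-a * s) * (1 - exp (-s)) ^ (b - 1) := by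
        rw [hss]; ring_nf
    _ = _ := by ring

end IncompleteBeta

/-- Uniform asymptotic expansion of the incomplete beta function: for fixed `b > 0` and
`N ≥ 1` there exist `C, A > 0` such that for all `a ≥ A` and `x ∈ (0,1]`, with `ξ = -log x`,
`|I_x(a,b) - (Γ(a+b)/Γ(a)) ∑_{n<N} d_n F_n| ≤ C a^(-N) (Γ(a+b)/Γ(a)) F_0`. -/
theorem uniform_asymptotic_expansion (b : ℝ) (hb : 0 < b) (N : ℕ) (hN : 1 ≤ N)
    (f : ℝ → ℝ)
    (hf : ∀ t : ℝ, f t = if t = 0 then 1 else ((1 - Real.exp (-t)) / t) ^ (b - 1)) :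
    ∃ C A : ℝ, 0 < C ∧ 0 < A ∧ ∀ a : ℝ, A ≤ a → ∀ x ∈ Set.Ioc (0 : ℝ) 1,
      ∀ ξ : ℝ, ξ = -Real.log x →
      |(Real.Gamma (a + b) / (Real.Gamma a * Real.Gamma b)) *
          (∫ t in (0 : ℝ)..x, t ^ (a - 1) * (1 - t) ^ (b - 1))
        - (Real.Gamma (a + b) / Real.Gamma a) * ∑ n ∈ Finset.range N,
            (iteratedDeriv n f ξ / (Nat.factorial n : ℝ)) *
            ((1 / Real.Gamma b) *
              ∫ t in Set.Ioi ξ, t ^ (b - 1) * Real.exp (-a * t) * (t - ξ) ^ n)|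
      ≤ C * a ^ (-(N : ℝ)) * (Real.Gamma (a + b) / Real.Gamma a) *
          ((1 / Real.Gamma b) * ∫ t in Set.Ioi ξ, t ^ (b - 1) * Real.exp (-a * t)) := by
  obtain ⟨n, rfl⟩ : ∃ n, N = n + 1 := ⟨N - 1, by omega⟩
  have hfeq := IncompleteBeta.eqOn_rpowMulCompExpNeg_of_eq_ite hf
  have hfc : ContDiff ℝ (n + 1) f := (IncompleteBeta.contDiff_of_eq_ite hf).of_le (mod_cast le_top)
  obtain ⟨C, hC, hest⟩ := IncompleteBeta.exists_abs_integral_sub_sum_le hb hfc hfeq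
  refine ⟨C, 1, hC, one_pos, fun a ha x ⟨hx0, hx1⟩ ξ hξ => ?_⟩
  have ha0 : 0 < a := one_pos.trans_le ha
  have hK : 0 < Gamma (a + b) / (Gamma a * Gamma b) := by
    have := Gamma_pos_of_pos ha0
    have := Gamma_pos_of_pos hb
    have := Gamma_pos_of_pos (add_pos ha0 hb)
    positivity
  have hsum : Gamma (a + b) / Gamma a * ∑ k ∈ Finset.range (n + 1), iteratedDeriv k f ξ / k ! *
        ((1 / Gamma b) * ∫ t in Ioi ξ, t ^ (b - 1) * exp (-a * t) * (t - ξ) ^ k)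
      = Gamma (a + b) / (Gamma a * Gamma b) * ∑ k ∈ Finset.range (n + 1),
          iteratedDeriv k f ξ / k ! * ∫ t in Ioi ξ, t ^ (b - 1) * exp (-a * t) * (t - ξ) ^ k := by
    rw [Finset.mul_sum, Finset.mul_sum]
    exact Finset.sum_congr rfl fun k _ => by ring
  rw [IncompleteBeta.integral_rpow_mul_one_sub_rpow_eq hfeq hx0 hx1, ← hξ, hsum, ← mul_sub, abs_mul,
    abs_of_pos hK]
  calc _ ≤ Gamma (a + b) / (Gamma a * Gamma b) *
        (C * a ^ (-((n + 1 : ℕ) : ℝ)) * ∫ t in Ioi ξ, t ^ (b - 1) * exp (-a * t)) :=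
        mul_le_mul_of_nonneg_left (hest a ha0 ξ (hξ ▸ neg_nonneg.2 (log_nonpos hx0.le hx1))) hK.le
    _ = _ := by ring
end

section
/- Let $a, b > 0$ and $0 \leq x < \tfrac12$. Then $I_x(a,b) = \frac{x^a (1-x)^{b-1}}{a\, B(a,b)} \sum_{n=0}^{\infty} \frac{(1-b)_n}{(a+1)_n} \left(\frac{x}{x-1}\right)^n$, where the series on the right-hand side converges absolutely and $(c)_n = c(c+1)\cdots(c+n-1)$ denotes the Pochhammer symbol (with $(c)_0 = 1$). -/
/-!
Integration by parts moves one power from `1 - t` to `t`: writing `B_x(p, q)` for the unnormalised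
incomplete beta integral,
`(a + n) B_x(a + n, b - n) = x^(a+n) (1-x)^(b-n-1) + (b-n-1) B_x(a+n+1, b-n-1)`.
Iterating, `a B_x(a, b)` telescopes into the partial sums of the series plus the remainder
`(-1)^N (1-b)_N / (a+1)_N (a + N) B_x(a + N, b - N)`. Since `t / (1 - t) ≤ x / (1 - x) < 1` on
`[0, x]`, the integral is at most `(x / (1 - x))^N B_x(a, b)`, and the Pochhammer ratio stays
bounded because `1 - b ≤ a + 1`; so the remainder tends to zero.
-/

open Real MeasureTheory Set
open Filter Topology

noncomputable def pochhammerRatio (α γ : ℝ) (n : ℕ) : ℝ :=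
  (∏ k ∈ Finset.range n, (α + k)) / ∏ k ∈ Finset.range n, (γ + k)

lemma pochhammerRatio_zero (α γ : ℝ) : pochhammerRatio α γ 0 = 1 := by
  simp [pochhammerRatio]

lemma pochhammerRatio_succ (α γ : ℝ) (n : ℕ) :
    pochhammerRatio α γ (n + 1) = pochhammerRatio α γ n * ((α + n) / (γ + n)) := by
  simp only [pochhammerRatio, Finset.prod_range_succ, mul_div_mul_comm]

lemma abs_pochhammerRatio_le_of_le {α γ : ℝ} (h : α ≤ γ) {m n : ℕ} (hm : -α ≤ m)
    (hmn : m ≤ n) :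
    |pochhammerRatio α γ n| ≤ |pochhammerRatio α γ m| := by
  induction n, hmn using Nat.le_induction with
  | base => rfl
  | succ n hmn ih =>
    have hαn : 0 ≤ α + n := by
      have : (m : ℝ) ≤ n := by exact_mod_cast hmn
      linarith
    rw [pochhammerRatio_succ, abs_mul, abs_div, abs_of_nonneg hαn,
      abs_of_nonneg (by linarith : 0 ≤ γ + n)]
    exact (mul_le_of_le_one_right (abs_nonneg _)
      (div_le_one_of_le₀ (by linarith) (by linarith))).trans ih

lemma exists_abs_pochhammerRatio_le {α γ : ℝ} (h : α ≤ γ) :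
    ∃ C, ∀ n, |pochhammerRatio α γ n| ≤ C := by
  set m := ⌈-α⌉₊
  have hle_sum : ∀ k ≤ m, |pochhammerRatio α γ k| ≤
      ∑ i ∈ Finset.range (m + 1), |pochhammerRatio α γ i| := fun k hk =>
    Finset.single_le_sum (f := fun i => |pochhammerRatio α γ i|) (fun i _ => abs_nonneg _)
      (Finset.mem_range.2 (Nat.lt_succ_of_le hk))
  refine ⟨∑ i ∈ Finset.range (m + 1), |pochhammerRatio α γ i|, fun n => ?_⟩
  rcases le_total n m with hn | hn
  · exact hle_sum n hn
  · exact (abs_pochhammerRatio_le_of_le h (Nat.le_ceil _) hn).trans (hle_sum m le_rfl)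

lemma summable_abs_pochhammerRatio_mul_pow {α γ z : ℝ} (h : α ≤ γ) (hz : |z| < 1) :
    Summable fun n => |pochhammerRatio α γ n * z ^ n| := by
  obtain ⟨C, hC⟩ := exists_abs_pochhammerRatio_le h
  refine Summable.of_nonneg_of_le (fun n => abs_nonneg _) (fun n => ?_)
    ((summable_geometric_of_lt_one (abs_nonneg z) hz).mul_left C)
  rw [abs_mul, abs_pow]
  exact mul_le_mul_of_nonneg_right (hC n) (by positivity)

noncomputable def incBeta (x p q : ℝ) : ℝ :=
  ∫ t in (0 : ℝ)..x, t ^ (p - 1) * (1 - t) ^ (q - 1)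

section incBeta

variable {x p q : ℝ}

lemma intervalIntegrable_rpow_mul_one_sub_rpow (hp : -1 < p) (hx0 : 0 ≤ x) (hx1 : x < 1) :
    IntervalIntegrable (fun t => t ^ p * (1 - t) ^ q) volume 0 x := by
  refine (intervalIntegral.intervalIntegrable_rpow' hp).mul_continuousOn ?_
  refine (continuous_const.sub continuous_id).continuousOn.rpow_const fun t ht => Or.inl ?_
  rw [uIcc_of_le hx0] at ht
  exact (sub_pos.2 (ht.2.trans_lt hx1)).ne'

lemma incBeta_nonneg (hx0 : 0 ≤ x) (hx1 : x ≤ 1) : 0 ≤ incBeta x p q :=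
  intervalIntegral.integral_nonneg hx0 fun t ht =>
    mul_nonneg (rpow_nonneg ht.1 _) (rpow_nonneg (by linarith [ht.2]) _)

lemma mul_incBeta (hp : 0 < p) (hx0 : 0 ≤ x) (hx1 : x < 1) :
    p * incBeta x p q = x ^ p * (1 - x) ^ (q - 1) + (q - 1) * incBeta x (p + 1) (q - 1) := by
  have h₁ :=
    intervalIntegrable_rpow_mul_one_sub_rpow (q := q - 1) (by linarith : -1 < p - 1) hx0 hx1
  have h₂ :=
    intervalIntegrable_rpow_mul_one_sub_rpow (q := q - 1 - 1) (by linarith : -1 < p) hx0 hx1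
  have hftc : ∫ t in (0 : ℝ)..x, (p * (t ^ (p - 1) * (1 - t) ^ (q - 1)) -
      (q - 1) * (t ^ p * (1 - t) ^ (q - 1 - 1))) = x ^ p * (1 - x) ^ (q - 1) := by
    rw [intervalIntegral.integral_eq_sub_of_hasDeriv_right_of_le
      (f := fun t => t ^ p * (1 - t) ^ (q - 1)) hx0 _ _
      ((h₁.const_mul p).sub (h₂.const_mul (q - 1))), zero_rpow hp.ne', zero_mul, sub_zero]
    · refine ContinuousOn.mul
        (fun t _ => (continuousAt_rpow_const t p (Or.inr hp.le)).continuousWithinAt) ?_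
      refine (continuous_const.sub continuous_id).continuousOn.rpow_const fun t ht => Or.inl ?_
      exact (sub_pos.2 (ht.2.trans_lt hx1)).ne'
    · intro t ht
      have hd₁ : HasDerivAt (fun s : ℝ => s ^ p) (p * t ^ (p - 1)) t :=
        hasDerivAt_rpow_const (Or.inl ht.1.ne')
      have hd₂ : HasDerivAt (fun s : ℝ => (1 - s) ^ (q - 1))
          (-1 * (q - 1) * (1 - t) ^ (q - 1 - 1)) t :=
        ((hasDerivAt_id t).const_sub 1).rpow_const (Or.inl (sub_pos.2 (ht.2.trans hx1)).ne')
      exact ((hd₁.mul hd₂).congr_deriv (by ring)).hasDerivWithinAt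
  rw [intervalIntegral.integral_sub (h₁.const_mul p) (h₂.const_mul (q - 1)),
    intervalIntegral.integral_const_mul, intervalIntegral.integral_const_mul] at hftc
  simp only [incBeta, add_sub_cancel_right]
  linarith

lemma incBeta_add_nat_sub_nat_le (hp : 0 < p) (hx0 : 0 ≤ x) (hx1 : x < 1) (n : ℕ) :
    incBeta x (p + n) (q - n) ≤ (x / (1 - x)) ^ n * incBeta x p q := by
  rw [incBeta, incBeta, ← intervalIntegral.integral_const_mul]
  refine intervalIntegral.integral_mono_on_of_le_Ioo hx0
    (intervalIntegrable_rpow_mul_one_sub_rpow (by linarith [n.cast_nonneg (α := ℝ)]) hx0 hx1)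
    ((intervalIntegrable_rpow_mul_one_sub_rpow (by linarith) hx0 hx1).const_mul _) fun t ht => ?_
  have h1t : 0 < 1 - t := by linarith [ht.2]
  have hsplit : t ^ (p + n - 1) * (1 - t) ^ (q - n - 1) =
      (t / (1 - t)) ^ n * (t ^ (p - 1) * (1 - t) ^ (q - 1)) := by
    rw [show p + n - 1 = p - 1 + n by ring, show q - n - 1 = q - 1 - n by ring,
      rpow_add_natCast ht.1.ne', rpow_sub_natCast h1t.ne', div_pow]
    field_simp
  rw [hsplit]
  refine mul_le_mul_of_nonneg_right (pow_le_pow_left₀ (div_nonneg ht.1.le h1t.le) ?_ n)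
    (mul_nonneg (rpow_nonneg ht.1.le _) (rpow_nonneg h1t.le _))
  exact div_le_div₀ hx0 ht.2.le (by linarith) (by linarith [ht.2])

end incBeta

noncomputable def incBetaRemainder (a b x : ℝ) (n : ℕ) : ℝ :=
  (-1) ^ n * pochhammerRatio (1 - b) (a + 1) n * ((a + n) * incBeta x (a + n) (b - n))

section incBetaRemainder

variable {a b x : ℝ}

lemma incBetaRemainder_zero : incBetaRemainder a b x 0 = a * incBeta x a b := by
  simp [incBetaRemainder, pochhammerRatio_zero]

lemma incBetaRemainder_sub_succ (ha : 0 < a) (hx0 : 0 ≤ x) (hx1 : x < 1) (n : ℕ) :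
    incBetaRemainder a b x n - incBetaRemainder a b x (n + 1) =
      x ^ a * (1 - x) ^ (b - 1) * (pochhammerRatio (1 - b) (a + 1) n * (x / (x - 1)) ^ n) := by
  have h1x : 1 - x ≠ 0 := (sub_pos.2 hx1).ne'
  have hrec := mul_incBeta (q := b - n) (by positivity : 0 < a + n) hx0 hx1
  have hratio : pochhammerRatio (1 - b) (a + 1) (n + 1) * (a + n + 1) =
      pochhammerRatio (1 - b) (a + 1) n * (1 - b + n) := by
    rw [pochhammerRatio_succ]
    field_simp
    ring
  have hpow : (-1) ^ n * (x ^ (a + n) * (1 - x) ^ (b - n - 1)) =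
      x ^ a * (1 - x) ^ (b - 1) * (x / (x - 1)) ^ n := by
    rw [rpow_add_natCast' hx0 (by positivity), show b - n - 1 = b - 1 - n by ring,
      rpow_sub_natCast h1x, div_pow, show x - 1 = -(1 - x) by ring, neg_pow (1 - x)]
    field_simp
    rw [← pow_mul, mul_comm n, pow_mul, neg_one_sq, one_pow, one_mul]
  simp only [incBetaRemainder, Nat.cast_succ, show a + (n + 1) = a + n + 1 by ring,
    show b - (n + 1) = b - n - 1 by ring] at hrec ⊢
  linear_combination (-1) ^ n * pochhammerRatio (1 - b) (a + 1) n * hrec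
    + (-1) ^ n * incBeta x (a + n + 1) (b - n - 1) * hratio
    + pochhammerRatio (1 - b) (a + 1) n * hpow

end incBetaRemainder

lemma abs_div_sub_one_lt_one {x : ℝ} (hx0 : 0 ≤ x) (hx : x < 1 / 2) : |x / (x - 1)| < 1 := by
  rw [abs_div, abs_of_nonneg hx0, abs_of_neg (by linarith), div_lt_one (by linarith)]
  linarith

lemma tendsto_incBetaRemainder {a b x : ℝ} (ha : 0 < a) (hab : 0 ≤ a + b) (hx0 : 0 ≤ x)
    (hx : x < 1 / 2) : Tendsto (incBetaRemainder a b x) atTop (𝓝 0) := by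
  set r := x / (1 - x)
  have hr0 : 0 ≤ r := div_nonneg hx0 (by linarith)
  have hr1 : r < 1 := by
    rw [div_lt_one (by linarith)]
    linarith
  obtain ⟨C, hC⟩ := exists_abs_pochhammerRatio_le (by linarith : 1 - b ≤ a + 1)
  have hbound : ∀ n : ℕ, ‖incBetaRemainder a b x n‖ ≤
      C * incBeta x a b * (a * r ^ n + n * r ^ n) := fun n => by
    have han : 0 < a + n := by positivity
    have hJ := incBeta_add_nat_sub_nat_le (q := b) ha hx0 (by linarith) n
    rw [Real.norm_eq_abs, incBetaRemainder, abs_mul, abs_mul, abs_pow, abs_neg, abs_one, one_pow,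
      one_mul, abs_of_nonneg (mul_nonneg han.le (incBeta_nonneg hx0 (by linarith)))]
    calc |pochhammerRatio (1 - b) (a + 1) n| * ((a + n) * incBeta x (a + n) (b - n))
        ≤ C * ((a + n) * (r ^ n * incBeta x a b)) :=
          mul_le_mul (hC n) (mul_le_mul_of_nonneg_left hJ han.le)
            (mul_nonneg han.le (incBeta_nonneg hx0 (by linarith))) ((abs_nonneg _).trans (hC n))
      _ = C * incBeta x a b * (a * r ^ n + n * r ^ n) := by ring
  refine squeeze_zero_norm hbound ?_
  simpa using (((tendsto_pow_atTop_nhds_zero_of_lt_one hr0 hr1).const_mul a).add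
    (tendsto_self_mul_const_pow_of_lt_one hr0 hr1)).const_mul (C * incBeta x a b)

lemma hasSum_incBeta {a b x : ℝ} (ha : 0 < a) (hab : 0 ≤ a + b) (hx0 : 0 ≤ x)
    (hx : x < 1 / 2) :
    HasSum (fun n => x ^ a * (1 - x) ^ (b - 1) *
      (pochhammerRatio (1 - b) (a + 1) n * (x / (x - 1)) ^ n)) (a * incBeta x a b) := by
  have hs := (summable_abs_pochhammerRatio_mul_pow (by linarith : 1 - b ≤ a + 1)
    (abs_div_sub_one_lt_one hx0 hx)).of_abs
  rw [(hs.mul_left _).hasSum_iff_tendsto_nat]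
  simp_rw [← incBetaRemainder_sub_succ (b := b) ha hx0 (by linarith : x < 1),
    Finset.sum_range_sub', ← incBetaRemainder_zero (b := b) (x := x)]
  simpa using tendsto_const_nhds.sub (tendsto_incBetaRemainder ha hab hx0 hx)

/-- Convergent expansion for the incomplete beta function: for `a, b > 0` and
`0 ≤ x < 1/2`,
`I_x(a,b) = (x^a (1-x)^(b-1)/(a B(a,b))) ∑_{n≥0} ((1-b)_n/(a+1)_n) (x/(x-1))^n`,
where the series converges absolutely and `(c)_n = ∏_{k<n} (c+k)` is the Pochhammer symbol. -/
theorem incompleteBeta_hypergeometric (a b x : ℝ) (ha : 0 < a) (hb : 0 < b)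
    (hx0 : 0 ≤ x) (hx1 : x < 1 / 2) :
    Summable (fun n : ℕ =>
      |(∏ k ∈ Finset.range n, (1 - b + (k : ℝ))) / (∏ k ∈ Finset.range n, (a + 1 + (k : ℝ))) *
        (x / (x - 1)) ^ n|) ∧
    (Real.Gamma (a + b) / (Real.Gamma a * Real.Gamma b)) *
        ∫ t in (0 : ℝ)..x, t ^ (a - 1) * (1 - t) ^ (b - 1)
      = x ^ a * (1 - x) ^ (b - 1) /
          (a * (Real.Gamma a * Real.Gamma b / Real.Gamma (a + b))) *
        ∑' n : ℕ,
          (∏ k ∈ Finset.range n, (1 - b + (k : ℝ))) / (∏ k ∈ Finset.range n, (a + 1 + (k : ℝ))) *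
            (x / (x - 1)) ^ n := by
  refine ⟨summable_abs_pochhammerRatio_mul_pow (by linarith) (abs_div_sub_one_lt_one hx0 hx1), ?_⟩
  have hsum := (hasSum_incBeta (b := b) ha (by linarith) hx0 hx1).tsum_eq
  rw [tsum_mul_left] at hsum
  simp only [pochhammerRatio, incBeta] at hsum
  have hΓa := Gamma_pos_of_pos ha
  have hΓb := Gamma_pos_of_pos hb
  have hΓab := Gamma_pos_of_pos (add_pos ha hb)
  rw [div_mul_eq_mul_div (x ^ a * (1 - x) ^ (b - 1)), hsum]
  field_simp
end
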